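/- arXiv:2404.11312 — 9 statements merged into one kernel-verified Lean document; each statement's English description precedes it below -/
import Mathlib

section
/- Let H and K be finite groups and A = {1}. If there is a consecutive product-one free sequence of length t_1 over H and one of length t_2 over K, then there is a consecutive product-one free sequence of length t_2(t_1+1)+t_1 over H × K. Consequently, C(H × K) ≥ C(H) · C(K). -/
/-- A list `S` over a monoid has a nonempty consecutive product-one subsequence. -/
def ConsecOne {G : Type*} [Monoid G] (S : List G) : Prop :=
  ∃ T : List G, T ≠ [] ∧ T <:+: S ∧ T.prod = 1

/-- The consecutive Davenport constant `C(G)`. -/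
noncomputable def CDav (G : Type*) [Monoid G] : ℕ :=
  sInf {ℓ : ℕ | ∀ S : List G, ℓ ≤ S.length → ConsecOne S}

/-- A list `S` over a monoid has a nonempty `A`-weighted consecutive product-one subsequence. -/
def WConsecOne {G : Type*} [Monoid G] (A : Set ℕ) (S : List G) : Prop :=
  ∃ T : List (G × ℕ), T ≠ [] ∧ T.map Prod.fst <:+: S ∧ (∀ p ∈ T, p.2 ∈ A) ∧
    (T.map fun p => p.1 ^ p.2).prod = 1

/-- The `A`-weighted consecutive Davenport constant `C_A(G)`. -/
noncomputable def CDavA (A : Set ℕ) (G : Type*) [Monoid G] : ℕ :=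
  sInf {ℓ : ℕ | ∀ S : List G, ℓ ≤ S.length → WConsecOne A S}

section aux

lemma consecOne_of_take {G : Type*} [Group G] {S : List G} {i j : ℕ} (hij : i < j)
    (hj : j ≤ S.length) (h : (S.take i).prod = (S.take j).prod) : ConsecOne S := by
  refine ⟨(S.drop i).take (j - i), ?_, ?_, ?_⟩
  · have hl : ((S.drop i).take (j - i)).length = j - i := by
      rw [List.length_take, List.length_drop]; omega
    intro he; rw [he] at hl; simp at hl; omega
  · exact ((S.drop i).take_prefix _).isInfix.trans (S.drop_suffix i).isInfix
  · have h2 : S.take j = S.take i ++ (S.drop i).take (j - i) := by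
      rw [← List.take_add]; congr 1; omega
    have h3 := congrArg List.prod h2
    rw [List.prod_append, ← h] at h3
    exact (left_eq_mul.mp h3)

lemma exists_take_of_consecOne {G : Type*} [Group G] {S : List G} (h : ConsecOne S) :
    ∃ i j, i < j ∧ j ≤ S.length ∧ (S.take i).prod = (S.take j).prod := by
  obtain ⟨T, hT, ⟨l₁, l₂, rfl⟩, hp⟩ := h
  refine ⟨l₁.length, l₁.length + T.length, ?_, ?_, ?_⟩
  · have := List.length_pos_iff.mpr hT; omega
  · simp
  · have h4 : (l₁ ++ T ++ l₂).take l₁.length = l₁ := by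
      rw [List.append_assoc]; exact List.take_left
    have h5 : (l₁ ++ T ++ l₂).take (l₁.length + T.length) = l₁ ++ T := by
      rw [show l₁.length + T.length = (l₁ ++ T).length by simp]
      exact List.take_left
    rw [h4, h5, List.prod_append, hp, mul_one]

lemma not_consecOne_iff_free {G : Type*} [Group G] (S : List G) :
    ¬ ConsecOne S ↔ ∀ i j, i ≤ S.length → j ≤ S.length →
      (S.take i).prod = (S.take j).prod → i = j := by
  constructor
  · intro h i j hi hj hij
    by_contra hne
    rcases lt_trichotomy i j with h' | h' | h'
    · exact h (consecOne_of_take h' hj hij)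
    · omega
    · exact h (consecOne_of_take h' hi hij.symm)
  · intro h hc
    obtain ⟨i, j, hij, hj, he⟩ := exists_take_of_consecOne hc
    have := h i j (by omega) hj he; omega

lemma not_consecOne_take {G : Type*} [Monoid G] {S : List G} (h : ¬ ConsecOne S) (n : ℕ) :
    ¬ ConsecOne (S.take n) := by
  rintro ⟨T, h1, h2, h3⟩
  exact h ⟨T, h1, h2.trans (S.take_prefix n).isInfix, h3⟩

lemma consecOne_of_card_le {G : Type*} [Group G] [Fintype G] (S : List G)
    (h : Fintype.card G ≤ S.length) : ConsecOne S := by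
  have hc : Fintype.card G < Fintype.card (Fin (S.length + 1)) := by simp; omega
  obtain ⟨i, j, hne, he⟩ :=
    Fintype.exists_ne_map_eq_of_card_lt (fun n : Fin (S.length + 1) => (S.take n).prod) hc
  rcases lt_trichotomy (i : ℕ) (j : ℕ) with h' | h' | h'
  · exact consecOne_of_take h' (by omega) he
  · exact absurd (Fin.ext h') hne
  · exact consecOne_of_take h' (by omega) he.symm

lemma exists_free_list {G : Type*} [Group G] {d : ℕ} (hd : d < CDav G) :
    ∃ T : List G, T.length = d ∧ ¬ ConsecOne T := by
  unfold CDav at hd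
  have hne : d ∉ {ℓ : ℕ | ∀ S : List G, ℓ ≤ S.length → ConsecOne S} :=
    Nat.notMem_of_lt_sInf hd
  simp only [Set.mem_setOf_eq] at hne
  push_neg at hne
  obtain ⟨S, hS, hSf⟩ := hne
  exact ⟨S.take d, by rw [List.length_take]; omega, not_consecOne_take hSf d⟩

end aux

section mk
variable {H K : Type*} [Group H] [Group K]

def mkL (S₁ : List H) : List K → List (H × K)
  | [] => S₁.map (fun a => (a, 1))
  | b :: S₂ => S₁.map (fun a => (a, 1)) ++ (1, b) :: mkL S₁ S₂

lemma mkL_length (S₁ : List H) (S₂ : List K) :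
    (mkL S₁ S₂).length = S₂.length * (S₁.length + 1) + S₁.length := by
  induction S₂ with
  | nil => simp [mkL]
  | cons b S₂ ih => simp [mkL, ih]; ring

lemma take_map_prod (S₁ : List H) (m : ℕ) :
    ((S₁.map (fun a => ((a, 1) : H × K))).take m).prod = ((S₁.take m).prod, 1) := by
  rw [← List.map_take]
  induction S₁.take m with
  | nil => simp; rfl
  | cons a l ih => simp [ih, Prod.ext_iff]

lemma mkL_take_nil (S₁ : List H) (m : ℕ) :
    ((mkL S₁ ([] : List K)).take m).prod = ((S₁.take m).prod, 1) :=
  take_map_prod S₁ m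

lemma mkL_take_le (S₁ : List H) (b : K) (S₂ : List K) {m : ℕ} (hm : m ≤ S₁.length) :
    ((mkL S₁ (b :: S₂)).take m).prod = ((S₁.take m).prod, 1) := by
  rw [mkL, List.take_append,
    show m - (S₁.map (fun a => ((a, 1) : H × K))).length = 0 by simp; omega]
  simp [take_map_prod]

lemma map_inl_prod (S₁ : List H) :
    (S₁.map (fun a => ((a, 1) : H × K))).prod = (S₁.prod, 1) := by
  induction S₁ with
  | nil => simp; rfl
  | cons a l ih => simp [ih, Prod.ext_iff]

lemma mkL_take_gt (S₁ : List H) (b : K) (S₂ : List K) {m : ℕ} (hm : S₁.length < m) :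
    ((mkL S₁ (b :: S₂)).take m).prod
      = (S₁.prod, b) * ((mkL S₁ S₂).take (m - S₁.length - 1)).prod := by
  rw [mkL, List.take_append, List.take_of_length_le (by simp; omega),
    show m - (S₁.map (fun a => ((a, 1) : H × K))).length = (m - S₁.length - 1) + 1 by
      simp; omega,
    List.take_succ_cons, List.prod_append, List.prod_cons, map_inl_prod, ← mul_assoc]
  congr 1
  simp [Prod.ext_iff]

lemma mkL_take_snd (S₁ : List H) (S₂ : List K) (m : ℕ) :
    ∃ c ≤ S₂.length, (((mkL S₁ S₂).take m).prod).2 = (S₂.take c).prod := by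
  induction S₂ generalizing m with
  | nil => exact ⟨0, le_refl _, by simp [mkL_take_nil]⟩
  | cons b S₂ ih =>
    rcases le_or_gt m S₁.length with hm | hm
    · exact ⟨0, by simp, by simp [mkL_take_le S₁ b S₂ hm]⟩
    · obtain ⟨c, hc, hc2⟩ := ih (m - S₁.length - 1)
      refine ⟨c + 1, by simp; omega, ?_⟩
      rw [mkL_take_gt S₁ b S₂ hm, Prod.snd_mul, hc2, List.take_succ_cons, List.prod_cons]

lemma mkL_free (S₁ : List H)
    (h1 : ∀ i j, i ≤ S₁.length → j ≤ S₁.length →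
      (S₁.take i).prod = (S₁.take j).prod → i = j) :
    ∀ S₂ : List K, (∀ i j, i ≤ S₂.length → j ≤ S₂.length →
      (S₂.take i).prod = (S₂.take j).prod → i = j) →
    ∀ m n, m ≤ (mkL S₁ S₂).length → n ≤ (mkL S₁ S₂).length →
      ((mkL S₁ S₂).take m).prod = ((mkL S₁ S₂).take n).prod → m = n := by
  intro S₂
  induction S₂ with
  | nil =>
    intro _ m n hm hn h
    rw [mkL_take_nil, mkL_take_nil] at h
    have hlen : (mkL S₁ ([] : List K)).length = S₁.length := by simp [mkL]
    exact h1 m n (by omega) (by omega) (Prod.ext_iff.mp h).1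
  | cons b S₂ ih =>
    intro h2 m n hm hn h
    have hlen : (mkL S₁ (b :: S₂)).length = S₁.length + 1 + (mkL S₁ S₂).length := by
      simp [mkL]; omega
    have mixed : ∀ m n : ℕ, m ≤ S₁.length → S₁.length < n →
        ((mkL S₁ (b :: S₂)).take m).prod = ((mkL S₁ (b :: S₂)).take n).prod → False := by
      intro m n hm1 hn1 hh
      rw [mkL_take_le S₁ b S₂ hm1, mkL_take_gt S₁ b S₂ hn1] at hh
      have hsnd := congrArg Prod.snd hh
      simp only [Prod.snd_mul] at hsnd
      obtain ⟨c, hc, hc2⟩ := mkL_take_snd S₁ S₂ (n - S₁.length - 1)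
      rw [hc2] at hsnd
      have heq : ((b :: S₂).take 0).prod = ((b :: S₂).take (c + 1)).prod := by
        simpa [List.take_succ_cons] using hsnd
      have := h2 0 (c + 1) (by simp) (by simp; omega) heq
      omega
    have h2' : ∀ i j, i ≤ S₂.length → j ≤ S₂.length →
        (S₂.take i).prod = (S₂.take j).prod → i = j := by
      intro i j hi hj hij
      have heq : ((b :: S₂).take (i + 1)).prod = ((b :: S₂).take (j + 1)).prod := by
        simp [List.take_succ_cons, hij]
      have := h2 (i + 1) (j + 1) (by simp; omega) (by simp; omega) heq
      omega
    rcases le_or_gt m S₁.length with hm1 | hm1 <;> rcases le_or_gt n S₁.length with hn1 | hn1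
    · rw [mkL_take_le S₁ b S₂ hm1, mkL_take_le S₁ b S₂ hn1] at h
      exact h1 m n hm1 hn1 (Prod.ext_iff.mp h).1
    · exact (mixed m n hm1 hn1 h).elim
    · exact (mixed n m hn1 hm1 h.symm).elim
    · rw [mkL_take_gt S₁ b S₂ hm1, mkL_take_gt S₁ b S₂ hn1] at h
      have h' := mul_left_cancel h
      have := ih h2' (m - S₁.length - 1) (n - S₁.length - 1) (by omega) (by omega) h'
      omega

end mk

/-- From consecutive product-one free sequences of lengths `t₁` over `H` and `t₂` over `K`,
one obtains a consecutive product-one free sequence of length `t₂(t₁+1)+t₁` over `H × K`;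
consequently `C(H × K) ≥ C(H)·C(K)`. -/
theorem stmt3 {H K : Type*} [Group H] [Group K] [Fintype H] [Fintype K]
    (t₁ t₂ : ℕ) (S₁ : List H) (S₂ : List K)
    (h₁ : S₁.length = t₁ ∧ ¬ ConsecOne S₁) (h₂ : S₂.length = t₂ ∧ ¬ ConsecOne S₂) :
    (∃ S : List (H × K), S.length = t₂ * (t₁ + 1) + t₁ ∧ ¬ ConsecOne S) ∧
      CDav H * CDav K ≤ CDav (H × K) := by
  obtain ⟨hl1, hf1⟩ := h₁
  obtain ⟨hl2, hf2⟩ := h₂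
  constructor
  · refine ⟨mkL S₁ S₂, ?_, ?_⟩
    · rw [mkL_length, hl1, hl2]
    · exact (not_consecOne_iff_free _).mpr
        (mkL_free S₁ ((not_consecOne_iff_free S₁).mp hf1) S₂
          ((not_consecOne_iff_free S₂).mp hf2))
  · by_cases hd1 : CDav H = 0
    · simp [hd1]
    by_cases hd2 : CDav K = 0
    · simp [hd2]
    obtain ⟨d₁, hd₁⟩ : ∃ e, CDav H = e + 1 := ⟨CDav H - 1, by omega⟩
    obtain ⟨d₂, hd₂⟩ : ∃ e, CDav K = e + 1 := ⟨CDav K - 1, by omega⟩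
    obtain ⟨T₁, hT₁l, hT₁f⟩ := exists_free_list (G := H) (d := d₁) (by omega)
    obtain ⟨T₂, hT₂l, hT₂f⟩ := exists_free_list (G := K) (d := d₂) (by omega)
    have hSf : ¬ ConsecOne (mkL T₁ T₂) :=
      (not_consecOne_iff_free _).mpr
        (mkL_free T₁ ((not_consecOne_iff_free T₁).mp hT₁f) T₂
          ((not_consecOne_iff_free T₂).mp hT₂f))
    have hSlen : (mkL T₁ T₂).length = d₂ * (d₁ + 1) + d₁ := by
      rw [mkL_length, hT₁l, hT₂l]
    have key : CDav H * CDav K ≤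
        sInf {ℓ : ℕ | ∀ S : List (H × K), ℓ ≤ S.length → ConsecOne S} := by
      apply le_csInf
      · exact ⟨Fintype.card (H × K), fun S hS => consecOne_of_card_le S hS⟩
      · intro ℓ hℓ
        simp only [Set.mem_setOf_eq] at hℓ
        by_contra hlt
        push_neg at hlt
        have hle : ℓ ≤ (mkL T₁ T₂).length := by
          rw [hSlen]
          rw [hd₁, hd₂] at hlt
          have : (d₁ + 1) * (d₂ + 1) = d₂ * (d₁ + 1) + d₁ + 1 := by ring
          omega
        exact hSf (hℓ _ hle)
    unfold CDav
    exact key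
end

section
/- In the metacyclic group G = ⟨x, y | y^n = 1, x^k = y^ℓ, y x = x y^s⟩, any product of a contiguous block of the sequence (y^{n-1} x)^{k-1} y^{n-1} has the form x^u y^v with either u ∈ [1, k-1], or u = 0 and v ∈ [1, n-1]; in particular, it is never the identity. -/
namespace List

variable {α : Type*} {b : α}

theorem IsPrefix.of_append_cons_of_not_mem {l l₁ l₂ : List α} (h : l <+: l₁ ++ b :: l₂)
    (hb : b ∉ l) : l <+: l₁ := by
  induction l₁ generalizing l with
  | nil =>
    rcases prefix_cons_iff.mp h with rfl | ⟨t, rfl, -⟩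
    · exact nil_prefix
    · exact absurd mem_cons_self hb
  | cons c l₁ ih =>
    rcases prefix_cons_iff.mp h with rfl | ⟨t, rfl, ht⟩
    · exact nil_prefix
    · exact cons_prefix_cons.mpr ⟨rfl, ih ht (fun hbt => hb (mem_cons_of_mem c hbt))⟩

theorem IsInfix.infix_or_infix_of_append_cons_of_not_mem {l l₁ l₂ : List α}
    (h : l <:+: l₁ ++ b :: l₂) (hb : b ∉ l) : l <:+: l₁ ∨ l <:+: l₂ := by
  induction l₁ with
  | nil =>
    rcases infix_cons_iff.mp h with hp | hi
    · exact .inl (hp.of_append_cons_of_not_mem (l₁ := []) hb).isInfix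
    · exact .inr hi
  | cons c l₁ ih =>
    rcases infix_cons_iff.mp h with hp | hi
    · exact .inl (hp.of_append_cons_of_not_mem (l₁ := c :: l₁) hb).isInfix
    · exact (ih hi).imp_left infix_cons

end List

open List

def blockWord (j m : ℕ) : List Bool :=
  (replicate j (replicate m false ++ [true])).flatten ++ replicate m false

theorem blockWord_succ (j m : ℕ) :
    blockWord (j + 1) m = replicate m false ++ true :: blockWord j m := by
  simp [blockWord, replicate_succ]

theorem map_cond_blockWord {α : Type*} (a b : α) (j m : ℕ) :
    (blockWord j m).map (cond · a b) =
      (replicate j (replicate m b ++ [a])).flatten ++ replicate m b := by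
  simp [blockWord, map_flatten, map_replicate]

theorem count_true_blockWord (j m : ℕ) : (blockWord j m).count true = j := by
  induction j with
  | zero => simp [blockWord, count_replicate]
  | succ j ih => simp [blockWord_succ, ih, count_replicate]

theorem length_le_of_infix_blockWord {l : List Bool} {j m : ℕ} (h : l <:+: blockWord j m)
    (hl : true ∉ l) : l.length ≤ m := by
  induction j with
  | zero => exact (infix_replicate_iff.mp h).1
  | succ j ih =>
    rw [blockWord_succ] at h
    rcases h.infix_or_infix_of_append_cons_of_not_mem hl with h | h
    · exact (infix_replicate_iff.mp h).1
    · exact ih h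

section Monoid

variable {M : Type*} [Monoid M] {x y : M} {s : ℕ}

theorem SemiconjBy.pow_left_pow_right (h : SemiconjBy x (y ^ s) y) (c : ℕ) :
    SemiconjBy (x ^ c) (y ^ s ^ c) y := by
  induction c with
  | zero => simp
  | succ c ih =>
    rw [pow_succ, pow_succ', pow_mul]
    exact ih.mul_left (h.pow_right _)

theorem exists_prod_map_cond_eq (h : SemiconjBy x (y ^ s) y) (w : List Bool) :
    ∃ v, (w.map (cond · x y)).prod = x ^ w.count true * y ^ v := by
  induction w with
  | nil => exact ⟨0, by simp⟩
  | cons b w ih =>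
    obtain ⟨v, hv⟩ := ih
    cases b
    · refine ⟨s ^ w.count true + v, ?_⟩
      rw [map_cons, prod_cons, hv, count_cons_of_ne (by decide), cond_false, ← mul_assoc,
        ← (h.pow_left_pow_right _).eq, mul_assoc, pow_add]
    · refine ⟨v, ?_⟩
      rw [map_cons, prod_cons, hv, count_cons_self, cond_true, ← mul_assoc, pow_succ']

theorem eq_zero_and_mod_eq_zero_of_pow_mul_pow_eq_one {k n u v : ℕ}
    (huniq : ∀ g : M, ∃! p : Fin k × Fin n, g = x ^ (p.1 : ℕ) * y ^ (p.2 : ℕ))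
    (hy : y ^ n = 1) (hu : u < k) (h : x ^ u * y ^ v = 1) : u = 0 ∧ v % n = 0 := by
  obtain ⟨p, -, hp⟩ := huniq 1
  have hn : 0 < n := p.2.pos
  have hmod : x ^ u * y ^ (v % n) = 1 := by
    rw [← h, ← Nat.mod_add_div v n, pow_add y, pow_mul, hy, one_pow, mul_one, Nat.mod_add_div]
  have := (hp (⟨u, hu⟩, ⟨v % n, Nat.mod_lt v hn⟩) hmod.symm).trans
    (hp (⟨0, Nat.zero_lt_of_lt hu⟩, ⟨0, hn⟩) (by simp)).symm
  simp only [Prod.mk.injEq, Fin.mk.injEq] at this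
  exact this

end Monoid

theorem stmt6_general {G : Type*} [Group G] (n k s : ℕ)
    (x y : G) (hy : y ^ n = 1) (hyx : y * x = x * y ^ s)
    (huniq : ∀ g : G, ∃! p : Fin k × Fin n, g = x ^ (p.1 : ℕ) * y ^ (p.2 : ℕ))
    (T : List G) (hT : T ≠ [])
    (hTS : T <:+: (List.replicate (k - 1) (List.replicate (n - 1) y ++ [x])).flatten ++
      List.replicate (n - 1) y) :
    (∃ u v : ℕ, T.prod = x ^ u * y ^ v ∧
        ((1 ≤ u ∧ u ≤ k - 1) ∨ (u = 0 ∧ 1 ≤ v ∧ v ≤ n - 1))) ∧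
      T.prod ≠ 1 := by
  rw [← map_cond_blockWord] at hTS
  obtain ⟨w, hw, rfl⟩ := infix_map_iff.mp hTS
  have hwk : w.count true ≤ k - 1 := (hw.count_le true).trans (count_true_blockWord _ _).le
  obtain ⟨⟨⟨_, hk⟩, -⟩, -⟩ := huniq 1
  by_cases hu : w.count true = 0
  · have hno_x : true ∉ w := count_eq_zero.mp hu
    have hrep : w = replicate w.length false :=
      eq_replicate_iff.mpr ⟨rfl, fun b hb => by simpa using ne_of_mem_of_not_mem hb hno_x⟩
    have hlen : w.length ≤ n - 1 := length_le_of_infix_blockWord hw hno_x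
    have hpos : 0 < w.length := length_pos_iff.mpr (by simpa using hT)
    have hprod : (w.map (cond · x y)).prod = x ^ 0 * y ^ w.length := by
      rw [hrep]; simp
    refine ⟨⟨0, w.length, hprod, .inr ⟨rfl, hpos, hlen⟩⟩, fun h1 => ?_⟩
    have := (eq_zero_and_mod_eq_zero_of_pow_mul_pow_eq_one huniq hy (by omega) (hprod ▸ h1)).2
    rw [Nat.mod_eq_of_lt (by omega)] at this
    omega
  · obtain ⟨v, hv⟩ := exists_prod_map_cond_eq hyx.symm w
    exact ⟨⟨_, v, hv, .inl ⟨Nat.one_le_iff_ne_zero.mpr hu, hwk⟩⟩, fun h1 =>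
      hu (eq_zero_and_mod_eq_zero_of_pow_mul_pow_eq_one huniq hy (by omega) (hv ▸ h1)).1⟩

/-- In the metacyclic group `G = ⟨x, y | yⁿ = 1, xᵏ = yˡ, yx = xyˢ⟩`, every product of a
nonempty contiguous block of the sequence `(y^[n-1] x)^[k-1] y^[n-1]` has the form `xᵘ yᵛ`
with `u ∈ [1, k-1]`, or `u = 0` and `v ∈ [1, n-1]`; in particular it is never `1`. -/
theorem stmt6 {G : Type*} [Group G] [Fintype G] (n k l s : ℕ) (hn : 0 < n) (hk : 0 < k)
    (x y : G) (hy : y ^ n = 1) (hx : x ^ k = y ^ l) (hyx : y * x = x * y ^ s)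
    (hd1 : (n : ℤ) ∣ (s : ℤ) ^ k - 1) (hd2 : (n : ℤ) ∣ (l : ℤ) * ((s : ℤ) - 1))
    (huniq : ∀ g : G, ∃! p : Fin k × Fin n, g = x ^ (p.1 : ℕ) * y ^ (p.2 : ℕ))
    (T : List G) (hT : T ≠ [])
    (hTS : T <:+: (List.replicate (k - 1) (List.replicate (n - 1) y ++ [x])).flatten ++
      List.replicate (n - 1) y) :
    (∃ u v : ℕ, T.prod = x ^ u * y ^ v ∧
        ((1 ≤ u ∧ u ≤ k - 1) ∨ (u = 0 ∧ 1 ≤ v ∧ v ≤ n - 1))) ∧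
      T.prod ≠ 1 :=
  stmt6_general n k s x y hy hyx huniq T hT hTS
end

section
/- Let H and K be finite groups with exp(H) = exp(K) and A ⊆ [1, exp(K) - 1]. Then C_A(H × K) ≥ C_A(H) · C_A(K). -/
/-- Splitting an infix around an element it doesn't contain. -/
lemma infix_split {α : Type*} {M X Y : List α} {z : α}
    (h : M <:+: X ++ z :: Y) (hz : z ∉ M) : M <:+: X ∨ M <:+: Y := by
  obtain ⟨P, Q, hW⟩ := h
  have hlen : P.length + (M.length + Q.length) = X.length + (Y.length + 1) := by
    have := congrArg List.length hW; simpa using this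
  by_cases h1 : P.length + M.length ≤ X.length
  · left
    have hp : P ++ M <+: X ++ z :: Y := ⟨Q, by simpa [List.append_assoc] using hW⟩
    have hx : X <+: X ++ z :: Y := List.prefix_append _ _
    have h2 := List.prefix_of_prefix_length_le hp hx (by simpa using h1)
    exact (List.suffix_append P M).isInfix.trans h2.isInfix
  by_cases h2 : X.length < P.length
  · right
    have hs : M ++ Q <:+ X ++ z :: Y := ⟨P, by simpa [List.append_assoc] using hW⟩
    have hy : Y <:+ X ++ z :: Y := ⟨X ++ [z], by simp⟩
    have h3 := List.suffix_of_suffix_length_le hs hy (by simp; omega)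
    exact (List.prefix_append M Q).isInfix.trans h3.isInfix
  · exfalso
    push_neg at h1 h2
    apply hz
    have hlt : X.length < (X ++ z :: Y).length := by simp
    have e1 : (X ++ z :: Y)[X.length] = z := by
      rw [List.getElem_append_right (le_refl _)]
      simp
    rw [← hW] at hlt
    have e2 : (P ++ M ++ Q)[X.length]'hlt = z := by rw [← e1]; congr 1
    have hx2 : X.length - P.length < M.length := by omega
    have hx3 : X.length < (P ++ M).length := by simp; omega
    rw [List.getElem_append_left hx3, List.getElem_append_right h2] at e2
    rw [← e2]
    exact List.getElem_mem _

/-- Pigeonhole: any list of length ≥ |G| has an A-weighted consecutive product-one subsequence. -/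
lemma wc_of_card_le {G : Type*} [Group G] [Fintype G] {A : Set ℕ} {a : ℕ} (ha : a ∈ A)
    (S : List G) (hS : Fintype.card G ≤ S.length) : WConsecOne A S := by
  set f : Fin (Fintype.card G + 1) → G := fun i => ((S.take i).map (· ^ a)).prod with hf
  obtain ⟨i, j, hij, hfe⟩ := Fintype.exists_ne_map_eq_of_card_lt f (by simp)
  wlog hlt : (i : ℕ) < (j : ℕ) generalizing i j
  · exact this j i hij.symm hfe.symm (by have := Fin.val_ne_of_ne hij; omega)
  refine ⟨((S.drop i).take (j - i)).map (fun g => (g, a)), ?_, ?_, ?_, ?_⟩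
  · have hj : (j : ℕ) ≤ Fintype.card G := by omega
    simp [List.length_take, List.length_drop]
    omega
  · rw [List.map_map]
    have : (Prod.fst ∘ fun g => ((g, a) : G × ℕ)) = id := rfl
    rw [this, List.map_id]
    exact ((List.take_prefix _ _).isInfix).trans (List.drop_suffix _ _).isInfix
  · intro p hp
    obtain ⟨g, -, rfl⟩ := List.mem_map.mp hp
    exact ha
  · rw [List.map_map]
    have hsum : (j : ℕ) = i + (j - i) := by omega
    have hta : S.take ((i : ℕ) + ((j : ℕ) - i)) = S.take i ++ (S.drop i).take ((j : ℕ) - i) :=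
      List.take_add
    rw [← hsum] at hta
    have hfj : f j = f i * (((S.drop i).take (j - i)).map (· ^ a)).prod := by
      rw [hf]
      simp only
      rw [hta, List.map_append, List.prod_append]
    rw [← hfe] at hfj
    have hone : (((S.drop i).take (j - i)).map (· ^ a)).prod = 1 := by
      rwa [left_eq_mul] at hfj
    simpa [Function.comp_def] using hone

lemma ne_one_of_noWC {G : Type*} [Group G] {A : Set ℕ} {a : ℕ} (ha : a ∈ A)
    {S : List G} (hS : ¬ WConsecOne A S) : ∀ s ∈ S, s ≠ 1 := by
  intro s hs hs1
  subst hs1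
  apply hS
  obtain ⟨P, Q, hPQ⟩ := List.mem_iff_append.mp hs
  exact ⟨[(1, a)], by simp, ⟨P, Q, by simp [hPQ]⟩, by simpa using ha, by simp⟩

lemma zero_not_mem {G : Type*} [Group G] {A : Set ℕ} :
    0 ∉ {ℓ : ℕ | ∀ S : List G, ℓ ≤ S.length → WConsecOne A S} := by
  intro h
  obtain ⟨T, hT0, hTinf, -, -⟩ := h [] (by simp)
  apply hT0
  have := List.eq_nil_of_infix_nil hTinf
  simpa using this

lemma filter_pow_prod {G : Type*} [Monoid G] (pred : G × ℕ → Bool)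
    (hpred : ∀ p, pred p = false → p.1 = 1) (U : List (G × ℕ)) :
    ((U.filter pred).map (fun p => p.1 ^ p.2)).prod = (U.map fun p => p.1 ^ p.2).prod := by
  induction U with
  | nil => rfl
  | cons p U ih =>
    cases hp : pred p
    · simp [List.filter_cons, hp, ih, hpred p hp]
    · simp [List.filter_cons, hp, ih]

lemma map_fst_filter {G : Type*} (pred : G → Bool) (U : List (G × ℕ)) :
    (U.filter (fun p => pred p.1)).map Prod.fst = (U.map Prod.fst).filter pred := by
  induction U with
  | nil => rfl
  | cons p U ih =>
    cases hp : pred p.1 <;> simp [List.filter_cons, hp, ih]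

lemma filter_flat {K : Type*} (c : List K) (pred : K → Bool) (hc : c.filter pred = []) :
    ∀ T : List K, (∀ t ∈ T, pred t = true) →
      ((T.map (fun t => c ++ [t])).flatten ++ c).filter pred = T := by
  intro T
  induction T with
  | nil => intro _; simpa using hc
  | cons t T' ih =>
    intro hT
    simp only [List.map_cons, List.flatten_cons, List.append_assoc, List.filter_append, hc,
      List.nil_append]
    rw [List.filter_cons_of_pos (hT t (by simp))]
    have := ih (fun x hx => hT x (by simp [hx]))
    simp only [List.filter_append, hc, List.nil_append] at this ⊢
    rw [this]
    rfl

lemma L2 {H K : Type*} [Monoid H] [Monoid K] (S₁ : List (H × K)) (M : List (H × K)) :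
    ∀ (T : List K), (∀ t ∈ T, t ≠ 1) → (∀ x ∈ M, x.2 = 1) →
    M <:+: (T.map (fun t => S₁ ++ [((1 : H), t)])).flatten ++ S₁ → M <:+: S₁ := by
  intro T
  induction T with
  | nil => intro _ _ h; simpa using h
  | cons t T' ih =>
    intro hT1 hM h
    have h' : M <:+: S₁ ++ (((1 : H), t) :: ((T'.map (fun t => S₁ ++ [((1 : H), t)])).flatten ++ S₁)) := by
      simpa [List.append_assoc] using h
    rcases infix_split h' (by
      intro hmem
      have := hM _ hmem
      exact hT1 t (by simp) this) with h1 | h1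
    · exact h1
    · exact ih (fun x hx => hT1 x (by simp [hx])) hM h1

/-- If `exp(H) = exp(K)` and `A ⊆ [1, exp(K) - 1]`, then `C_A(H × K) ≥ C_A(H)·C_A(K)`. -/
theorem stmt10 {H K : Type*} [Group H] [Group K] [Fintype H] [Fintype K] (A : Set ℕ)
    (hexp : Monoid.exponent H = Monoid.exponent K)
    (hA : A ⊆ Set.Icc 1 (Monoid.exponent K - 1)) :
    CDavA A H * CDavA A K ≤ CDavA A (H × K) := by
  classical
  rcases Set.eq_empty_or_nonempty A with rfl | ⟨a, ha⟩
  · have hempty : {ℓ : ℕ | ∀ S : List H, ℓ ≤ S.length → WConsecOne (∅ : Set ℕ) S} = ∅ := by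
      ext ℓ
      simp only [Set.mem_setOf_eq, Set.mem_empty_iff_false, iff_false]
      intro h
      obtain ⟨T, hT0, -, hTA, -⟩ := h (List.replicate ℓ 1) (by simp)
      rcases T with - | ⟨p, T⟩
      · exact hT0 rfl
      · exact hTA p (by simp)
    rw [CDavA, hempty, Nat.sInf_empty, zero_mul]
    exact Nat.zero_le _
  set m := CDavA A H with hm
  set n := CDavA A K with hn
  have hSHne : ∃ ℓ, ℓ ∈ {ℓ : ℕ | ∀ S : List H, ℓ ≤ S.length → WConsecOne A S} :=
    ⟨Fintype.card H, fun S hS => wc_of_card_le ha S hS⟩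
  have hTKne : ∃ ℓ, ℓ ∈ {ℓ : ℕ | ∀ S : List K, ℓ ≤ S.length → WConsecOne A S} :=
    ⟨Fintype.card K, fun S hS => wc_of_card_le ha S hS⟩
  have hm1 : 1 ≤ m := by
    rcases Nat.eq_zero_or_pos m with h0 | h; swap; · exact h
    exfalso
    apply zero_not_mem (G := H) (A := A)
    rw [← h0]
    exact Nat.sInf_mem hSHne
  have hn1 : 1 ≤ n := by
    rcases Nat.eq_zero_or_pos n with h0 | h; swap; · exact h
    exfalso
    apply zero_not_mem (G := K) (A := A)
    rw [← h0]
    exact Nat.sInf_mem hTKne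
  obtain ⟨S, hSlen, hS⟩ : ∃ S : List H, m - 1 ≤ S.length ∧ ¬ WConsecOne A S := by
    have := Nat.notMem_of_lt_sInf (s := {ℓ : ℕ | ∀ S : List H, ℓ ≤ S.length → WConsecOne A S})
      (m := m - 1) (Nat.sub_lt hm1 one_pos)
    simpa [Set.mem_setOf_eq, not_forall] using this
  obtain ⟨T, hTlen, hT⟩ : ∃ T : List K, n - 1 ≤ T.length ∧ ¬ WConsecOne A T := by
    have := Nat.notMem_of_lt_sInf (s := {ℓ : ℕ | ∀ S : List K, ℓ ≤ S.length → WConsecOne A S})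
      (m := n - 1) (Nat.sub_lt hn1 one_pos)
    simpa [Set.mem_setOf_eq, not_forall] using this
  have hS1 : ∀ s ∈ S, s ≠ 1 := ne_one_of_noWC ha hS
  have hT1 : ∀ t ∈ T, t ≠ 1 := ne_one_of_noWC ha hT
  set S₁ : List (H × K) := S.map (fun s => (s, 1)) with hS₁
  set W : List (H × K) := (T.map (fun t => S₁ ++ [((1 : H), t)])).flatten ++ S₁ with hW
  have hWlen : W.length = T.length * (S.length + 1) + S.length := by
    rw [hW, List.length_append, List.length_flatten, List.map_map]
    have hcomp : (List.length ∘ fun t => S₁ ++ [((1 : H), t)]) = fun _ => S.length + 1 := by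
      funext t
      simp [hS₁]
    rw [hcomp, List.map_const', List.sum_replicate]
    simp [hS₁, mul_comm, smul_eq_mul]
  have hWno : ¬ WConsecOne A W := by
    rintro ⟨U, hU0, hUinf, hUA, hUprod⟩
    -- second coordinates
    have hprod2 : (U.map fun p => p.1.2 ^ p.2).prod = 1 := by
      have h := map_list_prod (MonoidHom.snd H K) (U.map fun p => p.1 ^ p.2)
      rw [hUprod, map_one, List.map_map] at h
      have he : (⇑(MonoidHom.snd H K) ∘ fun p : (H × K) × ℕ => p.1 ^ p.2) =
          fun p : (H × K) × ℕ => p.1.2 ^ p.2 := by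
        funext p
        simp [Prod.pow_snd]
      rw [he] at h
      exact h.symm
    set U₂ : List (K × ℕ) := U.map (fun p => (p.1.2, p.2)) with hU₂
    set pred : K → Bool := fun t => decide (t ≠ 1) with hpred
    set c : List K := S.map (fun _ => (1 : K)) with hc
    have hWsnd : W.map Prod.snd = (T.map (fun t => c ++ [t])).flatten ++ c := by
      rw [hW]
      simp [List.map_flatten, List.map_map, Function.comp_def, hS₁, hc]
    have hcf : c.filter pred = [] := by
      rw [List.filter_eq_nil_iff]
      intro x hx
      rw [hc] at hx
      simp at hx
      simp [hpred, hx]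
    have hWf : (W.map Prod.snd).filter pred = T := by
      rw [hWsnd]
      exact filter_flat c pred hcf T (fun t ht => by simp [hpred, hT1 t ht])
    have hV : U₂.filter (fun p => pred p.1) = [] := by
      by_contra hVne
      apply hT
      refine ⟨U₂.filter (fun p => pred p.1), hVne, ?_, ?_, ?_⟩
      · rw [map_fst_filter]
        rw [← hWf]
        apply List.IsInfix.filter
        have h := hUinf.map Prod.snd
        rw [List.map_map] at h
        rw [hU₂, List.map_map]
        exact h
      · intro p hp
        have hpU := List.mem_of_mem_filter hp
        rw [hU₂] at hpU
        obtain ⟨q, hq, rfl⟩ := List.mem_map.mp hpU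
        exact hUA q hq
      · rw [filter_pow_prod (fun p => pred p.1)
          (fun p hp => by simpa [hpred] using hp) U₂]
        rw [hU₂, List.map_map]
        exact hprod2
    -- all second coordinates are 1
    have hall : ∀ x ∈ U.map Prod.fst, x.2 = 1 := by
      intro x hx
      simp only [List.mem_map] at hx
      obtain ⟨q, hq, rfl⟩ := hx
      have hmem : (q.1.2, q.2) ∈ U₂ := by rw [hU₂]; exact List.mem_map_of_mem (f := fun p => (p.1.2, p.2)) hq
      have := List.filter_eq_nil_iff.mp hV _ hmem
      simpa [hpred] using this
    -- the block lies in a single copy of S₁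
    have hMS : U.map Prod.fst <:+: S₁ := L2 S₁ (U.map Prod.fst) T hT1 hall hUinf
    -- first coordinates give a witness for S
    apply hS
    refine ⟨U.map (fun p => (p.1.1, p.2)), by simpa using hU0, ?_, ?_, ?_⟩
    · rw [List.map_map]
      have h := hMS.map Prod.fst
      rw [List.map_map] at h
      have he : (Prod.fst ∘ fun s => ((s, (1:K)) : H × K)) = id := rfl
      rw [hS₁, List.map_map, he, List.map_id] at h
      exact h
    · intro p hp
      obtain ⟨q, hq, rfl⟩ := List.mem_map.mp hp
      exact hUA _ hq
    · rw [List.map_map]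
      have h := map_list_prod (MonoidHom.fst H K) (U.map fun p => p.1 ^ p.2)
      rw [hUprod, map_one, List.map_map] at h
      have he : (⇑(MonoidHom.fst H K) ∘ fun p : (H × K) × ℕ => p.1 ^ p.2) =
          fun p : (H × K) × ℕ => p.1.1 ^ p.2 := by
        funext p
        simp [Prod.pow_fst]
      rw [he] at h
      exact h.symm
  have hmem := Nat.sInf_mem (⟨Fintype.card (H × K), fun S hS => wc_of_card_le ha S hS⟩ :
    ∃ ℓ, ℓ ∈ {ℓ : ℕ | ∀ S : List (H × K), ℓ ≤ S.length → WConsecOne A S})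
  have hbig : W.length < CDavA A (H × K) := by
    by_contra hle
    push_neg at hle
    exact hWno (hmem W hle)
  have h1 : (n - 1) * m ≤ T.length * (S.length + 1) := Nat.mul_le_mul (by omega) (by omega)
  have h2 : m * n = (n - 1) * m + m := by
    have hn' : n - 1 + 1 = n := by omega
    calc m * n = m * ((n - 1) + 1) := by rw [hn']
      _ = (n - 1) * m + m := by ring
  omega
end

section
/- Let A = [1, n-1]. Then C_A(C_n^r) ≥ 2^r for every r ≥ 1, i.e., there exists a sequence of length 2^r - 1 over C_n^r with no A-weighted consecutive product-one subsequence. -/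
/-- A list `S` over an additive monoid has a nonempty `A`-weighted consecutive zero-sum
subsequence. -/
def WConsecZero {G : Type*} [AddMonoid G] (A : Set ℕ) (S : List G) : Prop :=
  ∃ T : List (G × ℕ), T ≠ [] ∧ T.map Prod.fst <:+: S ∧ (∀ p ∈ T, p.2 ∈ A) ∧
    (T.map fun p => p.2 • p.1).sum = 0

/-- The `A`-weighted consecutive Davenport constant `C_A(G)`, additive notation. -/
noncomputable def CDavAdd (A : Set ℕ) (G : Type*) [AddMonoid G] : ℕ :=
  sInf {ℓ : ℕ | ∀ S : List G, ℓ ≤ S.length → WConsecZero A S}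

/-- Between two positive numbers with the same 2-adic valuation there is a number of
strictly larger valuation. -/
lemma exists_between_of_valuation_eq (m c d : ℕ) (hc : 0 < c) (hcd : c < d)
    (h1 : padicValNat 2 c = m) (h2 : padicValNat 2 d = m) :
    ∃ e, c < e ∧ e ≤ d ∧ m < padicValNat 2 e := by
  have hd : 0 < d := lt_trans hc hcd
  have hpow : 0 < 2 ^ m := Nat.pow_pos (by norm_num)
  have h2c : 2 ^ m ∣ c := h1 ▸ pow_padicValNat_dvd
  have h2d : 2 ^ m ∣ d := h2 ▸ pow_padicValNat_dvd
  have hndc : ¬ 2 ^ (m + 1) ∣ c := by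
    have := pow_succ_padicValNat_not_dvd (p := 2) hc.ne'
    rwa [h1] at this
  refine ⟨c + 2 ^ m, by omega, ?_, ?_⟩
  · have hdvd : 2 ^ m ∣ d - c := Nat.dvd_sub h2d h2c
    have hle : 2 ^ m ≤ d - c := Nat.le_of_dvd (by omega) hdvd
    omega
  · obtain ⟨u, hu⟩ := h2c
    have hu_odd : ¬ 2 ∣ u := by
      intro ⟨v, hv⟩
      exact hndc ⟨v, by rw [hu, hv, pow_succ]; ring⟩
    have hdvd : 2 ^ (m + 1) ∣ c + 2 ^ m := by
      obtain ⟨w, hw⟩ : 2 ∣ u + 1 := by omega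
      refine ⟨w, ?_⟩
      rw [hu, pow_succ, ← Nat.mul_succ]
      rw [Nat.succ_eq_add_one, hw]
      ring
    have := (padicValNat_dvd_iff (p := 2) (m + 1) (c + 2 ^ m)).mp hdvd
    omega

lemma sum_map_eq_sum_fin {α M : Type*} [AddCommMonoid M] (l : List α) (g : α → M) :
    (l.map g).sum = ∑ k : Fin l.length, g l[(k : ℕ)] := by
  conv_lhs => rw [← List.ofFn_getElem (xs := l)]
  rw [List.map_ofFn, List.sum_ofFn]
  rfl

lemma list_sum_apply {ι : Type*} {M : ι → Type*} [∀ i, AddCommMonoid (M i)]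
    (l : List (∀ i, M i)) (j : ι) : l.sum j = (l.map fun g => g j).sum := by
  induction l with
  | nil => rfl
  | cons a l ih => simp [ih]

/-- With full weight `A = [1, n-1]`, there is a sequence of length `2^r - 1` over `C_nʳ`
with no `A`-weighted consecutive zero-sum subsequence, so `C_A(C_nʳ) ≥ 2ʳ`. -/
theorem stmt12 (n r : ℕ) (hn : 2 ≤ n) (hr : 1 ≤ r) :
    ∃ S : List (Fin r → ZMod n), S.length = 2 ^ r - 1 ∧
      ¬ WConsecZero (Set.Icc 1 (n - 1)) S := by
  haveI : NeZero n := ⟨by omega⟩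
  set N := 2 ^ r - 1 with hN
  set f : ℕ → (Fin r → ZMod n) :=
    fun k => fun j => if (j : ℕ) = padicValNat 2 (k + 1) then 1 else 0 with hf
  refine ⟨(List.range N).map f, by simp, ?_⟩
  rintro ⟨T, hT0, ⟨pref, suf, hps⟩, hA, hsum⟩
  set S := (List.range N).map f with hS
  set i := pref.length with hi
  set len := T.length with hlen
  have hlen1 : 1 ≤ len := List.length_pos_iff.mpr hT0
  have hilen : i + len ≤ N := by
    have := congrArg List.length hps
    simp [hS, ← hi, ← hlen] at this
    omega
  -- elements of T's first components
  have hTfst : ∀ k (hk : k < len), (T[k]'hk).1 = f (i + k) := by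
    intro k hk
    have h1 : T.map Prod.fst = (S.drop i).take len := by
      rw [← hps, List.append_assoc, hi, List.drop_left]
      exact (List.take_left' (by simp [hlen])).symm
    have hkS : i + k < S.length := by simp [hS]; omega
    calc (T[k]'hk).1 = (T.map Prod.fst)[k]'(by simpa [hlen] using hk) := by simp
      _ = ((S.drop i).take len)[k]'(by rw [← h1]; simpa [hlen] using hk) :=
          List.getElem_of_eq h1 _
      _ = f (i + k) := by
          rw [List.getElem_take, List.getElem_drop]
          simp [hS]
  -- the maximal 2-adic valuation over the block
  set I : Finset ℕ := Finset.Icc (i + 1) (i + len) with hI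
  have hIne : I.Nonempty := ⟨i + 1, by simp [hI]; omega⟩
  obtain ⟨t₀, ht₀I, ht₀sup⟩ := Finset.exists_mem_eq_sup I hIne (padicValNat 2)
  set m : ℕ := padicValNat 2 t₀ with hm
  have hmax : ∀ t ∈ I, padicValNat 2 t ≤ m := by
    intro t ht
    calc padicValNat 2 t ≤ I.sup (padicValNat 2) := Finset.le_sup ht
      _ = m := ht₀sup
  have ht₀mem : i + 1 ≤ t₀ ∧ t₀ ≤ i + len := by simpa [hI] using ht₀I
  have hmr : m < r := by
    have hdvd : 2 ^ m ∣ t₀ := pow_padicValNat_dvd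
    have h1 : 2 ^ m ≤ t₀ := Nat.le_of_dvd (by omega) hdvd
    have h2 : t₀ < 2 ^ r := by
      have : 1 ≤ 2 ^ r := Nat.one_le_two_pow
      omega
    exact (Nat.pow_lt_pow_iff_right (a := 2) one_lt_two).mp (lt_of_le_of_lt h1 h2)
  -- uniqueness of the position attaining the maximum
  have huniq : ∀ t, i + 1 ≤ t → t ≤ i + len → padicValNat 2 t = m → t = t₀ := by
    intro t ht1 ht2 htm
    by_contra hne
    have key : ∀ c d, i + 1 ≤ c → c < d → d ≤ i + len →
        padicValNat 2 c = m → padicValNat 2 d = m → False := by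
      intro c d hc1 hcd hd2 h1 h2
      obtain ⟨e, he1, he2, he3⟩ := exists_between_of_valuation_eq m c d (by omega) hcd h1 h2
      have : padicValNat 2 e ≤ m := hmax e (by simp [hI]; omega)
      omega
    rcases lt_or_gt_of_ne hne with h | h
    · exact key t t₀ ht1 h ht₀mem.2 htm hm.symm
    · exact key t₀ t ht₀mem.1 h ht2 hm.symm htm
  set k₀ : ℕ := t₀ - i - 1 with hk₀
  have hk₀len : k₀ < len := by omega
  have ht₀eq : t₀ = i + k₀ + 1 := by omega
  -- evaluate the zero-sum at coordinate m
  set j₀ : Fin r := ⟨m, hmr⟩ with hj₀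
  have hsum0 := congrFun hsum j₀
  rw [list_sum_apply, List.map_map] at hsum0
  simp only [Function.comp, Pi.smul_apply, Pi.zero_apply] at hsum0
  rw [sum_map_eq_sum_fin] at hsum0
  simp only [Function.comp_apply, Pi.smul_apply] at hsum0
  have hterm : ∀ k : Fin T.length,
      (T[(k : ℕ)]).2 • ((T[(k : ℕ)]).1 j₀)
        = if m = padicValNat 2 (i + (k : ℕ) + 1) then ((T[(k : ℕ)]).2 : ZMod n) else 0 := by
    intro k
    rw [hTfst (k : ℕ) (by simpa [hlen] using k.isLt)]
    simp only [hf, hj₀]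
    split_ifs with h
    · simp [nsmul_eq_mul]
    · simp
  simp only [hterm] at hsum0
  rw [Finset.sum_eq_single (⟨k₀, by simpa [hlen] using hk₀len⟩ : Fin T.length)] at hsum0
  · rw [if_pos (by rw [← ht₀eq, hm])] at hsum0
    simp only [Fin.val_mk] at hsum0
    have hw : (T[k₀]'(by simpa [hlen] using hk₀len)).2 ∈ Set.Icc 1 (n - 1) :=
      hA _ (List.getElem_mem _)
    simp only [Set.mem_Icc] at hw
    rw [ZMod.natCast_eq_zero_iff] at hsum0
    have := Nat.le_of_dvd (by omega) hsum0
    omega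
  · intro k _ hk
    rw [if_neg]
    intro hkm
    apply hk
    have hklen : (k : ℕ) < len := by simpa [hlen] using k.isLt
    have : i + (k : ℕ) + 1 = t₀ := huniq _ (by omega) (by omega) hkm.symm
    apply Fin.ext
    simp only
    omega
  · intro h
    exact absurd (Finset.mem_univ _) h
end

section
/- Let p be an odd prime and A = U(p)^2, the set of nonzero quadratic residues modulo p. Then C_A(C_p^r) ≥ 3^r for every r ≥ 1. -/
section Helpers

lemma my_prefix_split {α : Type*} {x : α} : ∀ (a : List α) {t b : List α},
    t <+: a ++ x :: b → x ∉ t → t <+: a := by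
  intro a
  induction a with
  | nil =>
    intro t b ht hx
    cases t with
    | nil => exact List.nil_prefix
    | cons c t' =>
      rw [List.nil_append, List.cons_prefix_cons] at ht
      exact absurd (ht.1 ▸ (List.mem_cons_self : c ∈ c :: t')) hx
  | cons d a' ih =>
    intro t b ht hx
    cases t with
    | nil => exact List.nil_prefix
    | cons c t' =>
      rw [List.cons_append, List.cons_prefix_cons] at ht
      exact List.cons_prefix_cons.mpr ⟨ht.1,
        ih ht.2 (fun hm => hx (List.mem_cons_of_mem _ hm))⟩

lemma my_infix_split {α : Type*} {x : α} : ∀ (a : List α) {t b : List α},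
    t <:+: a ++ x :: b → x ∉ t → t <:+: a ∨ t <:+: b := by
  intro a
  induction a with
  | nil =>
    intro t b ht hx
    rw [List.nil_append, List.infix_cons_iff] at ht
    rcases ht with h | h
    · cases t with
      | nil => exact Or.inl (List.nil_infix)
      | cons c t' =>
        rw [List.cons_prefix_cons] at h
        exact absurd (h.1 ▸ (List.mem_cons_self : c ∈ c :: t')) hx
    · exact Or.inr h
  | cons d a' ih =>
    intro t b ht hx
    rw [List.cons_append, List.infix_cons_iff] at ht
    rcases ht with h | h
    · left
      cases t with
      | nil => exact List.nil_infix
      | cons c t' =>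
        rw [List.cons_prefix_cons] at h
        exact (List.cons_prefix_cons.mpr ⟨h.1,
          my_prefix_split a' h.2 (fun hm => hx (List.mem_cons_of_mem _ hm))⟩).isInfix
    · rcases ih h hx with h' | h'
      · exact Or.inl (List.infix_cons_iff.mpr (Or.inr h'))
      · exact Or.inr h'

end Helpers

lemma my_sum_map_filter_eq {β M : Type*} [AddCommMonoid M] (p : β → Bool) (f : β → M) :
    ∀ (T : List β), (∀ q ∈ T, ¬ p q = true → f q = 0) →
      (T.map f).sum = ((T.filter p).map f).sum := by
  intro T
  induction T with
  | nil => simp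
  | cons q T ih =>
    intro h
    by_cases hq : p q = true
    · simp [List.filter_cons, hq, ih fun a ha hpa => h a (List.mem_cons_of_mem _ ha) hpa]
    · simp [List.filter_cons, hq, h q List.mem_cons_self hq,
        ih fun a ha hpa => h a (List.mem_cons_of_mem _ ha) hpa]

lemma stepBad {F G : Type*} [Field F] [AddCommMonoid G] (A : Set ℕ)
    (π : G →+ F) (S : List G) (x y : G)
    (hS : ¬ WConsecZero A S)
    (h0 : ∀ z ∈ S, π z = 0)
    (hx : π x ≠ 0) (hy : π y ≠ 0)
    (hA : ∀ a ∈ A, (a : F) ≠ 0)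
    (hpair : ∀ a ∈ A, ∀ b ∈ A, (a : F) * π x + (b : F) * π y ≠ 0) :
    ¬ WConsecZero A (S ++ x :: (S ++ y :: S)) := by
  classical
  rintro ⟨T, hTne, hinf, hw, hsum⟩
  set L := S ++ x :: (S ++ y :: S) with hL
  set t := T.map Prod.fst with ht
  have hsubL : t.Sublist L := hinf.sublist
  set P : G × ℕ → Bool := fun q => !decide (π q.1 = 0) with hP
  have hπ : (T.map fun q => (q.2 : F) * π q.1).sum = 0 := by
    have h1 : (T.map fun q => (q.2 : F) * π q.1) = (T.map fun q => q.2 • q.1).map π := by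
      rw [List.map_map]
      apply List.map_congr_left
      intro q _
      simp [Function.comp, map_nsmul, nsmul_eq_mul]
    rw [h1, ← map_list_sum, hsum, map_zero]
  have hsum' : ((T.filter P).map fun q => (q.2 : F) * π q.1).sum = 0 := by
    rw [← my_sum_map_filter_eq P _ T ?van]
    · exact hπ
    case van =>
      intro q _ hnq
      simp only [hP, Bool.not_eq_true', decide_eq_false_iff_not, not_not] at hnq
      simp [hnq]
  have hcount : (T.filter P).length ≤ 2 := by
    have h1 : (T.filter P).length = T.countP P := List.countP_eq_length_filter.symm
    have h2 : T.countP P = t.countP (fun z => !decide (π z = 0)) := by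
      rw [ht, List.countP_map]; rfl
    have h3 : t.countP (fun z => !decide (π z = 0)) ≤
        L.countP (fun z => !decide (π z = 0)) := hsubL.countP_le
    have hS0 : S.countP (fun z => !decide (π z = 0)) = 0 :=
      List.countP_eq_zero.mpr (by intro z hz; simpa using h0 z hz)
    have h4 : L.countP (fun z => !decide (π z = 0)) = 2 := by
      rw [hL]
      simp [List.countP_append, List.countP_cons, hS0, hx, hy]
    omega
  have hmemT : ∀ q ∈ T.filter P, q ∈ T := fun q hq => List.mem_of_mem_filter hq
  have hπT : ∀ q ∈ T.filter P, π q.1 ≠ 0 := by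
    intro q hq
    have := List.of_mem_filter hq
    simpa [hP] using this
  have hxy : ∀ q ∈ T.filter P, q.1 = x ∨ q.1 = y := by
    intro q hq
    have hqt : q.1 ∈ t := by rw [ht]; exact List.mem_map_of_mem (hmemT q hq)
    have hmem : q.1 ∈ L := hsubL.subset hqt
    have hne := hπT q hq
    rw [hL] at hmem
    simp only [List.mem_append, List.mem_cons] at hmem
    rcases hmem with h1 | h1 | h1 | h1 | h1
    · exact absurd (h0 _ h1) hne
    · exact Or.inl h1
    · exact absurd (h0 _ h1) hne
    · exact Or.inr h1
    · exact absurd (h0 _ h1) hne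
  have hxS : x ∉ S := fun hm => hx (h0 x hm)
  have hyS : y ∉ S := fun hm => hy (h0 y hm)
  rcases hT2 : T.filter P with _ | ⟨q1, _ | ⟨q2, _ | ⟨q3, T3⟩⟩⟩
  · -- no entries with nonzero projection
    have hall : ∀ q ∈ T, π q.1 = 0 := by
      intro q hq
      by_contra hne
      have : q ∈ T.filter P := List.mem_filter.mpr ⟨hq, by simp [hP, hne]⟩
      rw [hT2] at this
      simp at this
    have hxt : x ∉ t := by
      intro hxt
      obtain ⟨q, hq, hq1⟩ := List.mem_map.mp (ht ▸ hxt)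
      exact hx (hq1 ▸ hall q hq)
    have hyt : y ∉ t := by
      intro hyt
      obtain ⟨q, hq, hq1⟩ := List.mem_map.mp (ht ▸ hyt)
      exact hy (hq1 ▸ hall q hq)
    rcases my_infix_split S hinf hxt with h | h
    · exact hS ⟨T, hTne, h, hw, hsum⟩
    · rcases my_infix_split S h hyt with h' | h'
      · exact hS ⟨T, hTne, h', hw, hsum⟩
      · exact hS ⟨T, hTne, h', hw, hsum⟩
  · -- exactly one
    have hq1 : q1 ∈ T.filter P := by rw [hT2]; exact List.mem_cons_self
    have hsum1 : (q1.2 : F) * π q1.1 = 0 := by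
      rw [hT2] at hsum'; simpa using hsum'
    exact absurd hsum1 (mul_ne_zero (hA _ (hw q1 (hmemT q1 hq1))) (hπT q1 hq1))
  · -- exactly two
    have hq1 : q1 ∈ T.filter P := by rw [hT2]; exact List.mem_cons_self
    have hq2 : q2 ∈ T.filter P := by rw [hT2]; simp
    have ha : q1.2 ∈ A := hw q1 (hmemT q1 hq1)
    have hb : q2.2 ∈ A := hw q2 (hmemT q2 hq2)
    have hsum2 : (q1.2 : F) * π q1.1 + (q2.2 : F) * π q2.1 = 0 := by
      rw [hT2] at hsum'; simpa using hsum'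
    have hsub2 : [q1, q2].Sublist T := by
      rw [← hT2]; exact T.filter_sublist
    have hsubt : ([q1, q2].map Prod.fst).Sublist t := by
      rw [ht]; exact hsub2.map _
    rcases hxy q1 hq1 with h1 | h1 <;> rcases hxy q2 hq2 with h2 | h2
    · -- (x, x)
      by_cases hxeqy : x = y
      · refine hpair q1.2 ha q2.2 hb ?_
        have heq : (q1.2 : F) * π x + (q2.2 : F) * π y
            = (q1.2 : F) * π q1.1 + (q2.2 : F) * π q2.1 := by
          rw [h1, h2, hxeqy]
        exact heq.trans hsum2
      · exfalso
        have hcx : 2 ≤ t.count x := by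
          have := hsubt.count_le x
          simpa [h1, h2] using this
        have hcxL : L.count x = 1 := by
          rw [hL]
          simp [List.count_append, List.count_cons, List.count_eq_zero.mpr hxS, hxeqy, Ne.symm hxeqy]
        have := hsubL.count_le x
        omega
    · -- (x, y)
      refine hpair q1.2 ha q2.2 hb ?_
      rw [h1, h2] at hsum2; exact hsum2
    · -- (y, x)
      refine hpair q2.2 hb q1.2 ha ?_
      rw [h1, h2] at hsum2
      rw [add_comm] at hsum2
      exact hsum2
    · -- (y, y)
      by_cases hxeqy : x = y
      · refine hpair q1.2 ha q2.2 hb ?_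
        have heq : (q1.2 : F) * π x + (q2.2 : F) * π y
            = (q1.2 : F) * π q1.1 + (q2.2 : F) * π q2.1 := by
          rw [h1, h2, hxeqy]
        exact heq.trans hsum2
      · exfalso
        have hcy : 2 ≤ t.count y := by
          have := hsubt.count_le y
          simpa [h1, h2] using this
        have hcyL : L.count y = 1 := by
          rw [hL]
          have hyx : ¬ y = x := fun h => hxeqy h.symm
          simp [List.count_append, List.count_cons, List.count_eq_zero.mpr hyS, hyx, hxeqy]
        have := hsubL.count_le y
        omega
  · -- length ≥ 3 impossible
    rw [hT2] at hcount
    simp at hcount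

def badSeq (p r : ℕ) (g h : ZMod p) : ℕ → List (Fin r → ZMod p)
  | 0 => []
  | (k+1) =>
      if hk : k < r then
        badSeq p r g h k ++ (Pi.single (⟨k, hk⟩ : Fin r) g) ::
          (badSeq p r g h k ++ (Pi.single (⟨k, hk⟩ : Fin r) h) :: badSeq p r g h k)
      else badSeq p r g h k

lemma badSeq_length (p r : ℕ) (g h : ZMod p) :
    ∀ k, k ≤ r → (badSeq p r g h k).length = 3 ^ k - 1 := by
  intro k
  induction k with
  | zero => intro _; simp [badSeq]
  | succ k ih =>
    intro hk1
    have hk : k < r := hk1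
    rw [badSeq, dif_pos hk]
    rw [List.length_append, List.length_cons, List.length_append, List.length_cons,
      ih hk.le, pow_succ]
    have h3 : 1 ≤ 3 ^ k := Nat.one_le_pow _ _ (by norm_num)
    omega

lemma badSeq_support (p r : ℕ) (g h : ZMod p) :
    ∀ k, ∀ z ∈ badSeq p r g h k, ∀ j : Fin r, k ≤ (j : ℕ) → z j = 0 := by
  intro k
  induction k with
  | zero => intro z hz; simp [badSeq] at hz
  | succ k ih =>
    intro z hz j hj
    rw [badSeq] at hz
    by_cases hk : k < r
    · rw [dif_pos hk] at hz
      have hne : j ≠ (⟨k, hk⟩ : Fin r) := by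
        intro e
        rw [Fin.ext_iff] at e
        simp at e
        omega
      simp only [List.mem_append, List.mem_cons] at hz
      rcases hz with h1 | h1 | h1 | h1 | h1
      · exact ih z h1 j (by omega)
      · rw [h1]; exact Pi.single_eq_of_ne hne _
      · exact ih z h1 j (by omega)
      · rw [h1]; exact Pi.single_eq_of_ne hne _
      · exact ih z h1 j (by omega)
    · rw [dif_neg hk] at hz
      exact ih z hz j (by omega)

lemma badSeq_bad (p r : ℕ) [Fact p.Prime] (g h : ZMod p) (A : Set ℕ)
    (hA : ∀ a ∈ A, (a : ZMod p) ≠ 0)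
    (hg : g ≠ 0) (hh : h ≠ 0)
    (hpair : ∀ a ∈ A, ∀ b ∈ A, (a : ZMod p) * g + (b : ZMod p) * h ≠ 0) :
    ∀ k, k ≤ r → ¬ WConsecZero A (badSeq p r g h k) := by
  intro k
  induction k with
  | zero =>
    rintro _ ⟨T, hTne, hinf, -, -⟩
    rw [badSeq] at hinf
    have := List.sublist_nil.mp hinf.sublist
    exact hTne (List.map_eq_nil_iff.mp this)
  | succ k ih =>
    intro hk1
    have hk : k < r := hk1
    rw [badSeq, dif_pos hk]
    exact stepBad A (Pi.evalAddMonoidHom (fun _ : Fin r => ZMod p) ⟨k, hk⟩)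
      (badSeq p r g h k) (Pi.single ⟨k, hk⟩ g) (Pi.single ⟨k, hk⟩ h)
      (ih hk.le)
      (fun z hz => badSeq_support p r g h k z hz ⟨k, hk⟩ le_rfl)
      (by simpa using hg)
      (by simpa using hh)
      hA
      (by intro a ha b hb; simpa using hpair a ha b hb)

lemma wconsec_of_card_le {G : Type*} [AddCommGroup G] [Fintype G] (A : Set ℕ)
    (h1 : 1 ∈ A) (S : List G) (hlen : Fintype.card G ≤ S.length) : WConsecZero A S := by
  classical
  have hcard : (Finset.univ : Finset G).card < (Finset.range (Fintype.card G + 1)).card := by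
    simp
  obtain ⟨i, hi, j, hj, hij, hfij⟩ := Finset.exists_ne_map_eq_of_card_lt_of_maps_to hcard
    (fun i _ => Finset.mem_univ ((S.take i).sum))
  wlog hlt : i < j generalizing i j
  · exact this j hj i hi hij.symm hfij.symm (by omega)
  set t := (S.drop i).take (j - i) with htdef
  have hj' : j ≤ S.length := by
    have := Finset.mem_range.mp hj
    omega
  have htake : S.take j = S.take i ++ t := by
    have e : i + (j - i) = j := by omega
    rw [htdef, ← List.take_add, e]
  have hsum0 : t.sum = 0 := by
    rw [htake, List.sum_append] at hfij
    exact (left_eq_add.mp hfij)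
  have htlen : 0 < t.length := by
    rw [htdef, List.length_take, List.length_drop]
    omega
  have htne : t ≠ [] := List.ne_nil_of_length_pos htlen
  refine ⟨t.map (fun z => (z, 1)), by simp [htne], ?_, ?_, ?_⟩
  · have e1 : (t.map (fun z => (z, (1:ℕ)))).map Prod.fst = t := by
      rw [List.map_map]
      exact List.map_id t
    rw [e1]
    refine ⟨S.take i, S.drop j, ?_⟩
    rw [← htake, List.take_append_drop]
  · intro q hq
    obtain ⟨z, -, rfl⟩ := List.mem_map.mp hq
    exact h1
  · rw [List.map_map]
    have e2 : ((fun p : G × ℕ => p.2 • p.1) ∘ fun z => (z, (1:ℕ))) = id := by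
      funext z; simp
    rw [e2, List.map_id]
    exact hsum0

/-- For an odd prime `p` and `A = U(p)²` the nonzero quadratic residues mod `p`,
`C_A(C_pʳ) ≥ 3ʳ`. -/
theorem stmt13 (p : ℕ) (hp : p.Prime) (hodd : Odd p) (r : ℕ) (hr : 1 ≤ r) :
    3 ^ r ≤ CDavAdd
      {a : ℕ | a ∈ Set.Icc 1 (p - 1) ∧ ∃ x : ZMod p, x ≠ 0 ∧ (a : ZMod p) = x ^ 2}
      (Fin r → ZMod p) := by
  haveI : Fact p.Prime := ⟨hp⟩
  set A : Set ℕ :=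
    {a : ℕ | a ∈ Set.Icc 1 (p - 1) ∧ ∃ x : ZMod p, x ≠ 0 ∧ (a : ZMod p) = x ^ 2} with hAdef
  have hp2 : 2 ≤ p := hp.two_le
  have hAunit : ∀ a ∈ A, (a : ZMod p) ≠ 0 := by
    rintro a ⟨-, x, hx0, hx⟩
    rw [hx]
    exact pow_ne_zero _ hx0
  have h1A : 1 ∈ A := ⟨⟨le_rfl, by omega⟩, 1, one_ne_zero, by simp⟩
  have hpne2 : (ringChar (ZMod p)) ≠ 2 := by
    rw [ZMod.ringChar_zmod_n]
    intro e
    rw [e] at hodd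
    exact absurd hodd (by decide)
  obtain ⟨u, hu⟩ := FiniteField.exists_nonsquare hpne2
  have hu0 : u ≠ 0 := by
    rintro rfl
    exact hu ⟨0, by ring⟩
  have hg : (-u : ZMod p) ≠ 0 := neg_ne_zero.mpr hu0
  have hh : (1 : ZMod p) ≠ 0 := one_ne_zero
  have hpair : ∀ a ∈ A, ∀ b ∈ A, (a : ZMod p) * (-u) + (b : ZMod p) * 1 ≠ 0 := by
    rintro a ⟨-, s, hs0, hs⟩ b ⟨-, w, hw0, hw⟩ heq
    apply hu
    have hb : (b : ZMod p) = (a : ZMod p) * u := by linear_combination heq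
    have h2 : (w : ZMod p) ^ 2 = s ^ 2 * u := by
      rw [← hw, ← hs]
      exact hb
    refine ⟨w * s⁻¹, ?_⟩
    field_simp
    linear_combination -h2
  have hbad := badSeq_bad p r (-u) 1 A hAunit hg hh hpair r le_rfl
  have hlen := badSeq_length p r (-u) 1 r le_rfl
  unfold CDavAdd
  apply le_csInf
  · refine ⟨p ^ r, fun S hS => wconsec_of_card_le A h1A S ?_⟩
    rw [Fintype.card_fun, ZMod.card, Fintype.card_fin]
    exact hS
  · intro ℓ hℓ
    by_contra hcon
    push_neg at hcon
    have h3 : 1 ≤ 3 ^ r := Nat.one_le_pow _ _ (by norm_num)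
    exact hbad (hℓ (badSeq p r (-u) 1 r) (by rw [hlen]; omega))
end

section
/- Let p be an odd prime and A = U(p) \ U(p)^2, the set of quadratic non-residues modulo p. Then C_A(C_p^r) ≥ 3^r for every r ≥ 1. -/
namespace Stmt14Aux

open List

theorem not_wcz_nil {G : Type*} [AddMonoid G] (A : Set ℕ) :
    ¬ WConsecZero A ([] : List G) := by
  rintro ⟨T, hne, hinf, -, -⟩
  rw [List.infix_nil, List.map_eq_nil_iff] at hinf
  exact hne hinf

/-- Trichotomy for an infix of `X ++ s :: Y`. -/
theorem infix_split {α : Type*} {L X Y : List α} {s : α}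
    (h : L <:+: X ++ s :: Y) :
    L <:+: X ∨ L <:+: Y ∨ ∃ L1 L2, L = L1 ++ s :: L2 ∧ L1 <:+ X ∧ L2 <+: Y := by
  obtain ⟨pre, suf, hps⟩ := h
  by_cases hc2 : X.length < pre.length
  · -- L is an infix of Y
    right; left
    have hXpre : X <+: pre := by
      apply List.prefix_of_prefix_length_le (l₃ := X ++ s :: Y)
      · exact ⟨s :: Y, rfl⟩
      · exact ⟨L ++ suf, by simpa [List.append_assoc] using hps⟩
      · omega
    obtain ⟨pre2, rfl⟩ := hXpre
    have h2 : pre2 ++ L ++ suf = s :: Y := by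
      rw [List.append_assoc X pre2, List.append_assoc X] at hps
      exact List.append_cancel_left hps
    match pre2, h2 with
    | a :: pre3, h2 =>
      rw [List.cons_append, List.cons_append] at h2
      injection h2 with h4 h5
      exact ⟨pre3, suf, h5⟩
    | [], h2 => simp at hc2
  · -- pre.length ≤ X.length : X = pre ++ X2
    have hpreX : pre <+: X := by
      apply List.prefix_of_prefix_length_le (l₃ := X ++ s :: Y)
      · exact ⟨L ++ suf, by simpa [List.append_assoc] using hps⟩
      · exact ⟨s :: Y, rfl⟩
      · omega
    obtain ⟨X2, rfl⟩ := hpreX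
    have h2 : L ++ suf = X2 ++ s :: Y := by
      rw [List.append_assoc, List.append_assoc] at hps
      have := List.append_cancel_left hps
      simpa using this
    by_cases hc1 : L.length ≤ X2.length
    · left
      have : L <+: X2 := by
        apply List.prefix_of_prefix_length_le (l₃ := X2 ++ s :: Y)
        · exact ⟨suf, h2⟩
        · exact ⟨s :: Y, rfl⟩
        · exact hc1
      exact this.isInfix.trans (⟨pre, [], by simp⟩ : X2 <:+: pre ++ X2)
    · right; right
      have hX2L : X2 <+: L := by
        apply List.prefix_of_prefix_length_le (l₃ := X2 ++ s :: Y)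
        · exact ⟨s :: Y, rfl⟩
        · exact ⟨suf, h2⟩
        · omega
      obtain ⟨L2', rfl⟩ := hX2L
      have h3 : L2' ++ suf = s :: Y := by
        rw [List.append_assoc] at h2
        exact List.append_cancel_left h2
      match L2', h3 with
      | [], h3 => simp at hc1
      | a :: L2, h3 =>
        rw [List.cons_append] at h3
        injection h3 with h4 h5
        exact ⟨X2, L2, by rw [h4], ⟨pre, rfl⟩, ⟨suf, h5⟩⟩

theorem prefix_split {α : Type*} {L M N : List α} (h : L <+: M ++ N) :
    L <+: M ∨ ∃ L2, L = M ++ L2 ∧ L2 <+: N := by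
  by_cases hc : L.length ≤ M.length
  · left
    exact List.prefix_of_prefix_length_le h ⟨N, rfl⟩ hc
  · right
    have hML : M <+: L := List.prefix_of_prefix_length_le ⟨N, rfl⟩ h (by omega)
    obtain ⟨L2, rfl⟩ := hML
    exact ⟨L2, rfl, (List.prefix_append_right_inj M).mp h⟩

theorem sum_pi_zero {H K : Type*} [AddCommMonoid H] [AddCommMonoid K] (π : H →+ K)
    (T : List (H × ℕ)) (h : ∀ q ∈ T, π q.1 = 0) :
    π (T.map fun p => p.2 • p.1).sum = 0 := by
  rw [map_list_sum]
  apply List.sum_eq_zero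
  intro z hz
  simp only [List.map_map, List.mem_map, Function.comp] at hz
  obtain ⟨q, hq, rfl⟩ := hz
  rw [map_nsmul, h q hq, smul_zero]

theorem lift_list {G H : Type*} [AddMonoid G] [AddMonoid H] (ι : G →+ H) :
    ∀ (T : List (H × ℕ)), (∀ q ∈ T, q.1 ∈ Set.range ι) →
      ∃ T' : List (G × ℕ), T'.map (Prod.map ι id) = T := by
  intro T
  induction T with
  | nil => exact fun _ => ⟨[], rfl⟩
  | cons q T ih =>
    intro h
    obtain ⟨T', hT'⟩ := ih fun q hq => h q (List.mem_cons_of_mem _ hq)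
    obtain ⟨g, hg⟩ := h q (List.mem_cons_self)
    exact ⟨(g, q.2) :: T', by simp [hT', Prod.map, hg]⟩

theorem reflect {G H : Type*} [AddCommMonoid G] [AddCommMonoid H] (A : Set ℕ)
    (ι : G →+ H) (hinj : Function.Injective ι) (S : List G) (hS : ¬ WConsecZero A S)
    {T : List (H × ℕ)} (hne : T ≠ []) (hinf : T.map Prod.fst <:+: S.map ι)
    (hA : ∀ q ∈ T, q.2 ∈ A) (hsum : (T.map fun p => p.2 • p.1).sum = 0) : False := by
  -- extract L' <:+: S with T.map fst = L'.map ι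
  obtain ⟨pre, suf, hps⟩ := hinf
  have hmap : S.map ι = pre ++ (T.map Prod.fst ++ suf) := by
    rw [← hps, List.append_assoc]
  obtain ⟨M1, M23, rfl, hM1, hM23⟩ := List.map_eq_append_iff.mp hmap
  obtain ⟨M2, M3, rfl, hM2, hM3⟩ := List.map_eq_append_iff.mp hM23
  have hrange : ∀ q ∈ T, q.1 ∈ Set.range ι := by
    intro q hq
    have : q.1 ∈ T.map Prod.fst := List.mem_map_of_mem hq
    rw [← hM2] at this
    obtain ⟨g, -, hg⟩ := List.mem_map.mp this
    exact ⟨g, hg⟩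
  obtain ⟨T', hT'⟩ := lift_list ι T hrange
  apply hS
  refine ⟨T', ?_, ?_, ?_, ?_⟩
  · rintro rfl; exact hne (by simpa using hT'.symm)
  · have hfst : (T'.map Prod.fst).map ι = M2.map ι := by
      rw [hM2, ← hT']
      simp [List.map_map, Function.comp]
    have : T'.map Prod.fst = M2 := List.map_injective_iff.mpr hinj hfst
    rw [this]
    exact ⟨M1, M3, by simp⟩
  · intro q hq
    have : Prod.map ι id q ∈ T := by rw [← hT']; exact List.mem_map_of_mem hq
    exact hA _ this
  · apply hinj
    rw [map_zero, ← hsum, ← hT', map_list_sum, List.map_map, List.map_map]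
    refine congrArg List.sum (List.map_congr_left fun q hq => ?_)
    simp [Prod.map, map_nsmul]

theorem one_special {G H K : Type*} [AddCommMonoid G] [AddCommMonoid H] [AddCommMonoid K]
    (A : Set ℕ) (π : H →+ K) {s : H} (hs : ∀ a ∈ A, a • π s ≠ 0)
    {T : List (H × ℕ)} {L1 L2 : List H}
    (hT : T.map Prod.fst = L1 ++ s :: L2)
    (h1 : ∀ h ∈ L1, π h = 0) (h2 : ∀ h ∈ L2, π h = 0)
    (hA : ∀ q ∈ T, q.2 ∈ A) (hsum : (T.map fun p => p.2 • p.1).sum = 0) : False := by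
  obtain ⟨T1, T23, rfl, hT1, hT23⟩ := List.map_eq_append_iff.mp hT
  obtain ⟨t, T2, rfl, hts, hT2⟩ := List.map_eq_cons_iff.mp hT23
  have hπ : π ((((T1 ++ t :: T2)).map fun p => p.2 • p.1).sum) = 0 := by
    rw [hsum, map_zero]
  rw [List.map_append, List.sum_append, List.map_cons, List.sum_cons,
    map_add, map_add, map_nsmul] at hπ
  rw [sum_pi_zero π T1 (fun q hq => by
      apply h1; rw [← hT1]; exact List.mem_map_of_mem hq),
    sum_pi_zero π T2 (fun q hq => by
      apply h2; rw [← hT2]; exact List.mem_map_of_mem hq)] at hπ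
  rw [hts] at hπ
  simp only [zero_add, add_zero] at hπ
  exact hs t.2 (hA t (by simp)) hπ

theorem two_special {G H K : Type*} [AddCommMonoid G] [AddCommMonoid H] [AddCommMonoid K]
    (A : Set ℕ) (π : H →+ K) {s1 s2 : H}
    (hs : ∀ a ∈ A, ∀ b ∈ A, a • π s1 + b • π s2 ≠ 0)
    {T : List (H × ℕ)} {L1 L2 L3 : List H}
    (hT : T.map Prod.fst = L1 ++ s1 :: (L2 ++ s2 :: L3))
    (h1 : ∀ h ∈ L1, π h = 0) (h2 : ∀ h ∈ L2, π h = 0) (h3 : ∀ h ∈ L3, π h = 0)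
    (hA : ∀ q ∈ T, q.2 ∈ A) (hsum : (T.map fun p => p.2 • p.1).sum = 0) : False := by
  obtain ⟨T1, T2345, rfl, hT1, hT2345⟩ := List.map_eq_append_iff.mp hT
  obtain ⟨t, T345, rfl, hts, hT345⟩ := List.map_eq_cons_iff.mp hT2345
  obtain ⟨T3, T45, rfl, hT3, hT45⟩ := List.map_eq_append_iff.mp hT345
  obtain ⟨u, T5, rfl, hus, hT5⟩ := List.map_eq_cons_iff.mp hT45
  have hπ : π (((T1 ++ t :: (T3 ++ u :: T5)).map fun p => p.2 • p.1).sum) = 0 := by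
    rw [hsum, map_zero]
  rw [List.map_append, List.sum_append, List.map_cons, List.sum_cons,
    List.map_append, List.sum_append, List.map_cons, List.sum_cons] at hπ
  simp only [map_add, map_nsmul] at hπ
  rw [sum_pi_zero π T1 (fun q hq => by
      apply h1; rw [← hT1]; exact List.mem_map_of_mem hq),
    sum_pi_zero π T3 (fun q hq => by
      apply h2; rw [← hT3]; exact List.mem_map_of_mem hq),
    sum_pi_zero π T5 (fun q hq => by
      apply h3; rw [← hT5]; exact List.mem_map_of_mem hq)] at hπ
  rw [hts, hus] at hπ
  simp only [zero_add, add_zero] at hπ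
  exact hs t.2 (hA t (by simp)) u.2 (hA u (by simp)) hπ

theorem step {G H K : Type*} [AddCommMonoid G] [AddCommMonoid H] [AddCommMonoid K]
    (A : Set ℕ) (ι : G →+ H) (hinj : Function.Injective ι) (π : H →+ K)
    (hπ : ∀ g, π (ι g) = 0) (x y : H)
    (hx : ∀ a ∈ A, a • π x ≠ 0) (hy : ∀ b ∈ A, b • π y ≠ 0)
    (hxy : ∀ a ∈ A, ∀ b ∈ A, a • π x + b • π y ≠ 0)
    (S : List G) (hS : ¬ WConsecZero A S) :
    ¬ WConsecZero A (S.map ι ++ x :: (S.map ι ++ y :: S.map ι)) := by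
  have hkill : ∀ h ∈ S.map ι, π h = 0 := by
    intro h hh
    obtain ⟨g, -, rfl⟩ := List.mem_map.mp hh
    exact hπ g
  rintro ⟨T, hne, hinf, hA, hsum⟩
  rcases infix_split hinf with h | h | ⟨L1, L2, hLeq, h1, h2⟩
  · exact reflect A ι hinj S hS hne h hA hsum
  · rcases infix_split h with h' | h' | ⟨L1, L2, hLeq, h1, h2⟩
    · exact reflect A ι hinj S hS hne h' hA hsum
    · exact reflect A ι hinj S hS hne h' hA hsum
    · exact one_special (G := G) A π hy hLeq
        (fun h hh => hkill h (h1.subset hh)) (fun h hh => hkill h (h2.subset hh)) hA hsum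
  · rcases prefix_split h2 with h2' | ⟨L3, rfl, h3⟩
    · exact one_special (G := G) A π hx hLeq
        (fun h hh => hkill h (h1.subset hh)) (fun h hh => hkill h (h2'.subset hh)) hA hsum
    · match L3, h3 with
      | [], h3 =>
        exact one_special (G := G) A π hx (by simpa using hLeq)
          (fun h hh => hkill h (h1.subset hh)) hkill hA hsum
      | z :: L4, h3 =>
        rw [List.cons_prefix_cons] at h3
        obtain ⟨rfl, h4⟩ := h3
        exact two_special (G := G) A π hxy hLeq
          (fun h hh => hkill h (h1.subset hh)) hkill
          (fun h hh => hkill h (h4.subset hh)) hA hsum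

end Stmt14Aux

/-- For an odd prime `p` and `A = U(p) \ U(p)²` the quadratic non-residues mod `p`,
`C_A(C_pʳ) ≥ 3ʳ`. -/
theorem stmt14 (p : ℕ) (hp : p.Prime) (hodd : Odd p) (r : ℕ) (hr : 1 ≤ r) :
    3 ^ r ≤ CDavAdd
      {a : ℕ | a ∈ Set.Icc 1 (p - 1) ∧ IsUnit (a : ZMod p) ∧
        ¬ ∃ x : ZMod p, (a : ZMod p) = x ^ 2}
      (Fin r → ZMod p) := by
  haveI : Fact p.Prime := ⟨hp⟩
  set A : Set ℕ := {a : ℕ | a ∈ Set.Icc 1 (p - 1) ∧ IsUnit (a : ZMod p) ∧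
      ¬ ∃ x : ZMod p, (a : ZMod p) = x ^ 2} with hA
  have hp2 : p ≠ 2 := by
    rintro rfl
    exact (Nat.not_odd_iff_even.mpr (by decide)) hodd
  -- a nonsquare
  obtain ⟨n, hn⟩ : ∃ n : ZMod p, ¬ IsSquare n :=
    FiniteField.exists_nonsquare (by rw [ZMod.ringChar_zmod_n]; exact hp2)
  have hn0 : n ≠ 0 := fun h => hn (h ▸ ⟨0, by ring⟩)
  -- membership facts about A
  have hAunit : ∀ a ∈ A, (a : ZMod p) ≠ 0 := fun a ha => ha.2.1.ne_zero
  have hAns : ∀ a ∈ A, ¬ IsSquare (a : ZMod p) := by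
    intro a ha ⟨t, ht⟩
    exact ha.2.2 ⟨t, by rw [ht]; ring⟩
  -- n.val ∈ A
  have hnA : n.val ∈ A := by
    refine ⟨⟨?_, ?_⟩, ?_, ?_⟩
    · have hval0 : n.val ≠ 0 := by
        intro h
        apply hn0
        have := ZMod.natCast_rightInverse (n := p) n
        rw [h, Nat.cast_zero] at this
        exact this.symm
      omega
    · have := ZMod.val_lt n
      omega
    · rw [ZMod.natCast_rightInverse n]
      exact Ne.isUnit hn0
    · rw [ZMod.natCast_rightInverse n]
      rintro ⟨x, hx⟩
      exact hn ⟨x, by rw [hx]; ring⟩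
  -- key nonvanishing fact
  have key : ∀ a ∈ A, ∀ b ∈ A, (a : ZMod p) + (b : ZMod p) * (-n) ≠ 0 := by
    intro a ha b hb h
    have hab : (a : ZMod p) = (b : ZMod p) * n := by linear_combination h
    have hb0 : (b : ZMod p) ≠ 0 := hAunit b hb
    have hchi_a : quadraticChar (ZMod p) (a : ZMod p) = -1 :=
      quadraticChar_neg_one_iff_not_isSquare.mpr (hAns a ha)
    have hchi_b : quadraticChar (ZMod p) (b : ZMod p) = -1 :=
      quadraticChar_neg_one_iff_not_isSquare.mpr (hAns b hb)
    have hchi_n : quadraticChar (ZMod p) n = -1 :=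
      quadraticChar_neg_one_iff_not_isSquare.mpr hn
    have := map_mul (quadraticChar (ZMod p)) (b : ZMod p) n
    rw [← hab, hchi_a, hchi_b, hchi_n] at this
    norm_num at this
  -- the bad sequence of length 3^r - 1
  have exists_bad : ∀ r : ℕ, ∃ S : List (Fin r → ZMod p),
      S.length = 3 ^ r - 1 ∧ ¬ WConsecZero A S := by
    intro r
    induction r with
    | zero => exact ⟨[], by simp, Stmt14Aux.not_wcz_nil A⟩
    | succ r ih =>
      obtain ⟨S, hlen, hS⟩ := ih
      -- the embedding
      refine ⟨?_, ?_, ?_⟩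
      rotate_left 2
      · set ι : (Fin r → ZMod p) →+ (Fin (r + 1) → ZMod p) :=
          { toFun := fun g => Fin.cons 0 g
            map_zero' := by
              funext i
              refine Fin.cases ?_ ?_ i <;> simp
            map_add' := fun g h => by
              funext i
              refine Fin.cases ?_ ?_ i <;> simp } with hι
        have hinj : Function.Injective ι := by
          intro g h e
          funext i
          have := congrFun e i.succ
          simpa [hι] using this
        set π : (Fin (r + 1) → ZMod p) →+ ZMod p :=
          Pi.evalAddMonoidHom (fun _ : Fin (r + 1) => ZMod p) 0 with hπdef
        have hπι : ∀ g, π (ι g) = 0 := fun g => by simp [hι, hπdef]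
        exact Stmt14Aux.step A ι hinj π hπι (Fin.cons 1 0) (Fin.cons (-n) 0)
          (by
            intro a ha
            simp only [hπdef, Pi.evalAddMonoidHom_apply, Fin.cons_zero, smul_eq_mul,
              nsmul_eq_mul, mul_one]
            exact hAunit a ha)
          (by
            intro b hb
            simp only [hπdef, Pi.evalAddMonoidHom_apply, Fin.cons_zero, nsmul_eq_mul]
            exact fun h => (mul_ne_zero (hAunit b hb) (neg_ne_zero.mpr hn0)) h)
          (by
            intro a ha b hb
            simp only [hπdef, Pi.evalAddMonoidHom_apply, Fin.cons_zero, nsmul_eq_mul,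
              mul_one]
            exact key a ha b hb)
          S hS
      · simp only [List.length_append, List.length_cons, List.length_map, hlen]
        have h1 : 1 ≤ 3 ^ r := Nat.one_le_pow _ _ (by norm_num)
        have : 3 ^ (r + 1) = 3 ^ r * 3 := pow_succ 3 r
        omega
  -- upper bound: p ^ r + 1 works
  have hub : ∀ S : List (Fin r → ZMod p), p ^ r + 1 ≤ S.length → WConsecZero A S := by
    intro S hlen
    set N := p ^ r with hN
    have hcard : Fintype.card (Fin r → ZMod p) = p ^ r := by
      simp [ZMod.card]
    set P : Fin (N + 1) → (Fin r → ZMod p) :=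
      fun i => (((S.take i).map fun g => (n.val : ℕ) • g)).sum with hP
    obtain ⟨i, j, hij, hPij⟩ := Fintype.exists_ne_map_eq_of_card_lt P
      (by simp [hcard, hN])
    -- wlog i < j
    have main : ∀ i j : Fin (N + 1), (i : ℕ) < (j : ℕ) → P i = P j → WConsecZero A S := by
      intro i j hlt hPeq
      set B := (S.drop i).take (j - i) with hB
      refine ⟨B.map fun g => (g, n.val), ?_, ?_, ?_, ?_⟩
      · have hjb : (j : ℕ) ≤ N := by omega
        have : B.length = (j : ℕ) - i := by
          simp only [hB, List.length_take, List.length_drop]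
          omega
        intro h
        have hBnil : B = [] := by simpa using h
        rw [hBnil] at this
        have hjN : (j : ℕ) < N + 1 := j.isLt
        simp at this
        omega
      · have : (B.map fun g => (g, n.val)).map Prod.fst = B := by
          simp [List.map_map, Function.comp_def]
        rw [this]
        exact (List.take_prefix _ _).isInfix.trans (List.drop_suffix _ _).isInfix
      · intro q hq
        obtain ⟨g, -, rfl⟩ := List.mem_map.mp hq
        exact hnA
      · have htake : S.take j = S.take i ++ B := by
          rw [hB, ← List.take_add]
          congr 1
          omega
        have : P j = P i + (B.map fun g => (n.val : ℕ) • g).sum := by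
          rw [hP]
          simp only [htake, List.map_append, List.sum_append]
        rw [← hPeq, left_eq_add] at this
        rw [List.map_map]
        exact this
    rcases hij.lt_or_gt with h | h
    · exact main i j (by exact_mod_cast h) hPij
    · exact main j i (by exact_mod_cast h) hPij.symm
  -- conclude
  have hne : {ℓ : ℕ | ∀ S : List (Fin r → ZMod p), ℓ ≤ S.length → WConsecZero A S}.Nonempty :=
    ⟨p ^ r + 1, hub⟩
  have hmem := Nat.sInf_mem hne
  obtain ⟨S, hlenS, hS⟩ := exists_bad r
  by_contra hcon
  push_neg at hcon
  have h1 : 1 ≤ 3 ^ r := Nat.one_le_pow _ _ (by norm_num)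
  have : CDavAdd A (Fin r → ZMod p) ≤ S.length := by
    rw [hlenS]; unfold CDavAdd at hcon ⊢; omega
  exact hS (hmem S this)
end

section
/- Let n ≥ 2 and A = [1, n-1]. Then C_A(C_n^2) = 4: every sequence of length 4 over C_n × C_n has an A-weighted consecutive product-one subsequence, and there is a sequence of length 3 over C_n × C_n with none. -/
/-!
Weights in `[1, n - 1]` are exactly the nonzero residues mod `n`, so one may work with
`ZMod n`-linear relations. Since `|C_n²| = n² < n³`, any three elements `g₁, g₂, g₃` satisfy a
nontrivial relation, whose support is a block of consecutive terms unless it is `{1, 3}`.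
Applied to `g₁ g₂ g₃` and to `g₂ g₃ g₄`, this gives a consecutive zero-sum unless there are
relations supported on `{1, 3}` and on `{2, 4}`; then their sum has support `{1, 2, 3, 4}`.
For the lower bound take `(1, 0), (0, 1), (1, 0)`: a block containing `(0, 1)` has second
coordinate equal to the weight of `(0, 1)`, and every other block is a single `(1, 0)`.
-/

theorem WConsecZero.mono {G : Type*} [AddMonoid G] {A : Set ℕ} {S S' : List G}
    (h : WConsecZero A S) (hS : S <:+: S') : WConsecZero A S' :=
  let ⟨T, hne, hT, hA, hsum⟩ := h
  ⟨T, hne, hT.trans hS, hA, hsum⟩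

theorem List.infix_three {α : Type*} {L : List α} {a b c : α} (h : L <:+: [a, b, c]) :
    L = [] ∨ L = [a] ∨ L = [b] ∨ L = [c] ∨ L = [a, b] ∨ L = [b, c] ∨ L = [a, b, c] := by
  simp only [infix_cons_iff, prefix_cons_iff, infix_nil, prefix_nil] at h
  aesop

theorem Fintype.exists_ne_zero_sum_smul_eq_zero {R M ι : Type*} [Ring R] [Fintype R]
    [AddCommGroup M] [Module R M] [Fintype M] [Fintype ι] (g : ι → M)
    (h : Fintype.card M < Fintype.card R ^ Fintype.card ι) :
    ∃ c : ι → R, c ≠ 0 ∧ ∑ i, c i • g i = 0 := by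
  classical
  obtain ⟨x, y, hxy, he⟩ := Fintype.exists_ne_map_eq_of_card_lt
    (Fintype.linearCombination R g) (by rwa [Fintype.card_fun])
  refine ⟨x - y, sub_ne_zero.mpr hxy, ?_⟩
  rw [← Fintype.linearCombination_apply, map_sub, he, sub_self]

variable {n : ℕ}

theorem ZMod.natCast_ne_zero_of_mem_Icc {k : ℕ} (hk : k ∈ Set.Icc 1 (n - 1)) :
    (k : ZMod n) ≠ 0 := by
  rw [Ne, ZMod.natCast_eq_zero_iff]
  exact Nat.not_dvd_of_pos_of_lt hk.1 (by grind)

section Module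

variable [NeZero n] {M : Type*} [AddCommGroup M] [Module (ZMod n) M]

theorem wConsecZero_of_zmod_relation {S : List M} (B : List (M × ZMod n)) (hne : B ≠ [])
    (hB : B.map Prod.fst <:+: S) (hc : ∀ p ∈ B, p.2 ≠ 0)
    (hsum : (B.map fun p => p.2 • p.1).sum = 0) :
    WConsecZero (Set.Icc 1 (n - 1)) S := by
  refine ⟨B.map fun p => (p.1, p.2.val), by simpa using hne,
    by simpa [Function.comp_def] using hB, ?_, ?_⟩
  · simp only [List.mem_map, forall_exists_index, and_imp, forall_apply_eq_imp_iff₂]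
    intro p hp
    have := ZMod.val_lt p.2
    have := (ZMod.val_ne_zero p.2).mpr (hc p hp)
    exact ⟨by omega, by omega⟩
  · simpa [Function.comp_def, ← Nat.cast_smul_eq_nsmul (ZMod n)] using hsum

variable [Fintype M]

theorem wConsecZero_or_exists_smul_add_smul_eq_zero (hM : Fintype.card M < n ^ 3)
    (g₁ g₂ g₃ : M) :
    WConsecZero (Set.Icc 1 (n - 1)) [g₁, g₂, g₃] ∨
      ∃ a c : ZMod n, a ≠ 0 ∧ c ≠ 0 ∧ a • g₁ + c • g₃ = 0 := by
  obtain ⟨x, hx, hsum⟩ := Fintype.exists_ne_zero_sum_smul_eq_zero (R := ZMod n) ![g₁, g₂, g₃]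
    (by rwa [ZMod.card, Fintype.card_fin])
  simp only [Fin.sum_univ_three, Matrix.cons_val] at hsum
  set a := x 0
  set b := x 1
  set c := x 2
  have hnontriv : ¬ (a = 0 ∧ b = 0 ∧ c = 0) := fun ⟨ha, hb, hc⟩ =>
    hx (funext fun i => by fin_cases i <;> assumption)
  by_cases hb : b = 0
  · by_cases ha : a = 0
    · refine Or.inl (wConsecZero_of_zmod_relation [(g₃, c)] (by simp) ⟨[g₁, g₂], [], rfl⟩
        (by simpa using fun hc => hnontriv ⟨ha, hb, hc⟩) (by simpa [ha, hb] using hsum))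
    by_cases hc : c = 0
    · exact Or.inl (wConsecZero_of_zmod_relation [(g₁, a)] (by simp) ⟨[], [g₂, g₃], rfl⟩
        (by simpa using ha) (by simpa [hb, hc] using hsum))
    exact Or.inr ⟨a, c, ha, hc, by simpa [hb] using hsum⟩
  by_cases ha : a = 0 <;> by_cases hc : c = 0
  · exact Or.inl (wConsecZero_of_zmod_relation [(g₂, b)] (by simp) ⟨[g₁], [g₃], rfl⟩
      (by simpa using hb) (by simpa [ha, hc] using hsum))
  · exact Or.inl (wConsecZero_of_zmod_relation [(g₂, b), (g₃, c)] (by simp) ⟨[g₁], [], rfl⟩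
      (by simp [hb, hc]) (by simpa [ha] using hsum))
  · exact Or.inl (wConsecZero_of_zmod_relation [(g₁, a), (g₂, b)] (by simp) ⟨[], [g₃], rfl⟩
      (by simp [ha, hb]) (by simpa [hc] using hsum))
  · exact Or.inl (wConsecZero_of_zmod_relation [(g₁, a), (g₂, b), (g₃, c)] (by simp)
      (List.infix_refl _) (by simp [ha, hb, hc]) (by simpa [add_assoc] using hsum))

theorem wConsecZero_of_length_eq_four (hM : Fintype.card M < n ^ 3) {S : List M}
    (hS : S.length = 4) : WConsecZero (Set.Icc 1 (n - 1)) S := by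
  obtain ⟨g₁, g₂, g₃, g₄, rfl⟩ := List.length_eq_four.mp hS
  rcases wConsecZero_or_exists_smul_add_smul_eq_zero hM g₁ g₂ g₃ with h | ⟨a, c, ha, hc, h₁₃⟩
  · exact h.mono ⟨[], [g₄], rfl⟩
  rcases wConsecZero_or_exists_smul_add_smul_eq_zero hM g₂ g₃ g₄ with h | ⟨b, d, hb, hd, h₂₄⟩
  · exact h.mono ⟨[g₁], [], rfl⟩
  refine wConsecZero_of_zmod_relation [(g₁, a), (g₂, b), (g₃, c), (g₄, d)] (by simp)
    (List.infix_refl _) (by simp [ha, hb, hc, hd]) ?_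
  calc a • g₁ + (b • g₂ + (c • g₃ + (d • g₄ + 0)))
      = (a • g₁ + c • g₃) + (b • g₂ + d • g₄) := by abel
    _ = 0 := by rw [h₁₃, h₂₄, add_zero]

end Module

theorem not_wConsecZero_basis_triple :
    ¬ WConsecZero (Set.Icc 1 (n - 1)) [((1, 0) : ZMod n × ZMod n), (0, 1), (1, 0)] := by
  rintro ⟨T, hne, hT, hA, hsum⟩
  have hw : ∀ k ∈ T.map Prod.snd, (k : ZMod n) ≠ 0 := by
    simp only [List.mem_map]
    rintro _ ⟨p, hp, rfl⟩
    exact ZMod.natCast_ne_zero_of_mem_Icc (hA p hp)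
  rcases List.infix_three hT with h | h | h | h | h | h | h <;> clear hA hT <;>
    rcases T with _ | ⟨⟨g, a⟩, _ | ⟨⟨g', b⟩, _ | ⟨⟨g'', c⟩, T⟩⟩⟩ <;> simp_all [Prod.ext_iff]

/-- With full weight `A = [1, n-1]`, `C_A(C_n²) = 4`: every sequence of length `4` over
`C_n × C_n` has an `A`-weighted consecutive zero-sum subsequence, and some sequence of
length `3` has none. -/
theorem stmt15 (n : ℕ) (hn : 2 ≤ n) :
    (∀ S : List (ZMod n × ZMod n), S.length = 4 → WConsecZero (Set.Icc 1 (n - 1)) S) ∧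
      ∃ S : List (ZMod n × ZMod n), S.length = 3 ∧
        ¬ WConsecZero (Set.Icc 1 (n - 1)) S := by
  have : NeZero n := ⟨by omega⟩
  have hcard : Fintype.card (ZMod n × ZMod n) < n ^ 3 := by
    rw [Fintype.card_prod, ZMod.card, ← sq]
    exact Nat.pow_lt_pow_right hn (by norm_num)
  exact ⟨fun _ => wConsecZero_of_length_eq_four hcard, _, rfl, not_wConsecZero_basis_triple⟩
end

section
/- Let n ≥ 2, A = [1, n-1], and let g_1, g_2, g_3, g_4 be a sequence over C_n × C_n. Assume every 3-term subsequence of g_1,...,g_4 has a nonempty A-weighted product-one subsequence (this holds since D_A(C_n^2) = 3). Then there exist 1 ≤ i ≤ j ≤ 4 and exponents a_i, ..., a_j ∈ A with g_i^{a_i} ⋯ g_j^{a_j} = 1. -/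
section

variable {M : Type*} [AddCommMonoid M] {W : Set ℕ} {k : ℕ}

def HasWeightedZeroSumBlock (W : Set ℕ) (g : Fin k → M) : Prop :=
  ∃ i j : Fin k, i ≤ j ∧ ∃ a : Fin k → ℕ,
    (∀ t, i ≤ t → t ≤ j → a t ∈ W) ∧ ∑ t ∈ Finset.Icc i j, a t • g t = 0

namespace HasWeightedZeroSumBlock

theorem of_single {g : Fin k → M} {w : ℕ} (i : Fin k) (hw : w ∈ W) (h : w • g i = 0) :
    HasWeightedZeroSumBlock W g :=
  ⟨i, i, le_rfl, fun _ => w, fun _ _ _ => hw, by simpa using h⟩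

theorem of_sum_univ {g : Fin (k + 1) → M} (a : Fin (k + 1) → ℕ) (ha : ∀ t, a t ∈ W)
    (h : ∑ t, a t • g t = 0) : HasWeightedZeroSumBlock W g := by
  refine ⟨0, Fin.last k, Fin.zero_le _, a, fun t _ _ => ha t, ?_⟩
  rwa [show Finset.Icc 0 (Fin.last k) = Finset.univ by ext t; simp [Fin.le_last]]

theorem of_castSucc {g : Fin (k + 1) → M} (h : HasWeightedZeroSumBlock W (g ∘ Fin.castSucc)) :
    HasWeightedZeroSumBlock W g := by
  obtain ⟨i, j, hij, a, ha, hsum⟩ := h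
  refine ⟨i.castSucc, j.castSucc, Fin.castSucc_le_castSucc_iff.2 hij,
    Fin.snoc (α := fun _ => ℕ) a 0, fun t => ?_, ?_⟩
  · refine Fin.lastCases (fun _ hj => ?_) (fun t hi hj => ?_) t
    · exact absurd hj (Fin.castSucc_lt_last j).not_ge
    · simpa using ha t (Fin.castSucc_le_castSucc_iff.1 hi) (Fin.castSucc_le_castSucc_iff.1 hj)
  · rw [← Fin.map_castSuccEmb_Icc, Finset.sum_map]
    simpa using hsum

theorem of_succ {g : Fin (k + 1) → M} (h : HasWeightedZeroSumBlock W (g ∘ Fin.succ)) :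
    HasWeightedZeroSumBlock W g := by
  obtain ⟨i, j, hij, a, ha, hsum⟩ := h
  refine ⟨i.succ, j.succ, Fin.succ_le_succ_iff.2 hij,
    Fin.cons (α := fun _ => ℕ) 0 a, fun t => ?_, ?_⟩
  · refine Fin.cases (fun hi _ => ?_) (fun t hi hj => ?_) t
    · exact absurd hi (Fin.succ_pos i).not_ge
    · simpa using ha t (Fin.succ_le_succ_iff.1 hi) (Fin.succ_le_succ_iff.1 hj)
  · rw [← Fin.map_succEmb_Icc, Finset.sum_map]
    simpa using hsum

end HasWeightedZeroSumBlock

theorem hasWeightedZeroSumBlock_or_outer_of_three {g : Fin 3 → M} {a b c : ℕ}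
    (ha : a ∈ W ∨ a = 0) (hb : b ∈ W ∨ b = 0) (hc : c ∈ W ∨ c = 0)
    (hne : ¬ (a = 0 ∧ b = 0 ∧ c = 0)) (h : a • g 0 + b • g 1 + c • g 2 = 0) :
    HasWeightedZeroSumBlock W g ∨ (a ∈ W ∧ c ∈ W ∧ a • g 0 + c • g 2 = 0) := by
  rcases hb with hb | rfl
  · left
    rcases ha with ha | rfl <;> rcases hc with hc | rfl
    · exact .of_sum_univ ![a, b, c] (fun t => by fin_cases t <;> assumption)
        (by simpa [Fin.sum_univ_three] using h)
    · refine .of_castSucc (.of_sum_univ ![a, b] (fun t => by fin_cases t <;> assumption) ?_)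
      simpa [Fin.sum_univ_two] using h
    · refine .of_succ (.of_sum_univ ![b, c] (fun t => by fin_cases t <;> assumption) ?_)
      simpa [Fin.sum_univ_two] using h
    · exact .of_single 1 hb (by simpa using h)
  · rcases ha with ha | rfl <;> rcases hc with hc | rfl
    · exact .inr ⟨ha, hc, by simpa using h⟩
    · exact .inl (.of_single 0 ha (by simpa using h))
    · exact .inl (.of_single 2 hc (by simpa using h))
    · exact absurd ⟨rfl, rfl, rfl⟩ hne

end

theorem stmt16_general (n : ℕ) (g : Fin 4 → ZMod n × ZMod n)
    (h3 : ∀ i j l : Fin 4, i < j → j < l →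
      ∃ a b c : ℕ,
        (a ∈ Set.Icc 1 (n - 1) ∨ a = 0) ∧ (b ∈ Set.Icc 1 (n - 1) ∨ b = 0) ∧
        (c ∈ Set.Icc 1 (n - 1) ∨ c = 0) ∧ ¬ (a = 0 ∧ b = 0 ∧ c = 0) ∧
        a • g i + b • g j + c • g l = 0) :
    ∃ i j : Fin 4, i ≤ j ∧ ∃ a : Fin 4 → ℕ,
      (∀ t, i ≤ t → t ≤ j → a t ∈ Set.Icc 1 (n - 1)) ∧
      ∑ t ∈ Finset.Icc i j, a t • g t = 0 := by
  obtain ⟨a, b, c, ha, hb, hc, hne, h012⟩ := h3 0 1 2 (by decide) (by decide)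
  obtain ⟨a', b', c', ha', hb', hc', hne', h123⟩ := h3 1 2 3 (by decide) (by decide)
  rcases hasWeightedZeroSumBlock_or_outer_of_three (g := g ∘ Fin.castSucc) ha hb hc hne h012
    with hblock | ⟨ha, hc, h02⟩
  · exact hblock.of_castSucc
  rcases hasWeightedZeroSumBlock_or_outer_of_three (g := g ∘ Fin.succ) ha' hb' hc' hne' h123
    with hblock | ⟨ha', hc', h13⟩
  · exact hblock.of_succ
  refine HasWeightedZeroSumBlock.of_sum_univ ![a, a', c, c']
    (fun t => by fin_cases t <;> assumption) ?_
  calc ∑ t, ![a, a', c, c'] t • g t = (a • g 0 + c • g 2) + (a' • g 1 + c' • g 3) := by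
        simp only [Fin.sum_univ_four, Matrix.cons_val]; abel
    _ = 0 + 0 := congrArg₂ (· + ·) h02 h13
    _ = 0 := add_zero 0

/-- If every 3-term subsequence of `g₁, g₂, g₃, g₄` over `C_n × C_n` has a nonempty
`A`-weighted zero-sum subsequence for `A = [1, n-1]`, then the whole sequence has an
`A`-weighted *consecutive* zero-sum subsequence. -/
theorem stmt16 (n : ℕ) (hn : 2 ≤ n) (g : Fin 4 → ZMod n × ZMod n)
    (h3 : ∀ i j l : Fin 4, i < j → j < l →
      ∃ a b c : ℕ,
        (a ∈ Set.Icc 1 (n - 1) ∨ a = 0) ∧ (b ∈ Set.Icc 1 (n - 1) ∨ b = 0) ∧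
        (c ∈ Set.Icc 1 (n - 1) ∨ c = 0) ∧ ¬ (a = 0 ∧ b = 0 ∧ c = 0) ∧
        a • g i + b • g j + c • g l = 0) :
    ∃ i j : Fin 4, i ≤ j ∧ ∃ a : Fin 4 → ℕ,
      (∀ t, i ≤ t → t ≤ j → a t ∈ Set.Icc 1 (n - 1)) ∧
      ∑ t ∈ Finset.Icc i j, a t • g t = 0 :=
  stmt16_general n g h3
end

section
/- Let n ≥ 2 and A = [1, n-1]. The sequence (g,1), (1,h), (g,1) over C_n × C_n, where g and h are generators of the respective factors, has no A-weighted consecutive product-one subsequence; hence C_A(C_n^2) ≥ 4. -/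
lemma key19 {n : ℕ} (hn : 2 ≤ n) {x : ZMod n} (hx : addOrderOf x = n) {a : ℕ}
    (ha : a ∈ Set.Icc 1 (n - 1)) : a • x ≠ 0 := by
  intro h0
  have hdvd : n ∣ a := hx ▸ addOrderOf_dvd_of_nsmul_eq_zero h0
  obtain ⟨ha1, ha2⟩ := ha
  have := Nat.le_of_dvd (by omega) hdvd
  omega

lemma infix19 {α : Type*} {L : List α} {x y z : α} (hL : L <:+: [x, y, z]) :
    L = [] ∨ L = [x] ∨ L = [y] ∨ L = [z] ∨ L = [x, y] ∨ L = [y, z] ∨ L = [x, y, z] := by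
  obtain ⟨s, t, hst⟩ := hL
  rcases s with _ | ⟨a, _ | ⟨b, _ | ⟨c, s⟩⟩⟩ <;>
    rcases L with _ | ⟨u, _ | ⟨v, _ | ⟨w, _ | ⟨x4, L⟩⟩⟩⟩ <;>
    simp_all

lemma exists19 (n : ℕ) (hn : 2 ≤ n) :
    ∀ S : List (ZMod n × ZMod n), n * n + 1 ≤ S.length →
      WConsecZero (Set.Icc 1 (n - 1)) S := by
  haveI : NeZero n := ⟨by omega⟩
  intro S hS
  have hcard : Fintype.card (ZMod n × ZMod n) < Fintype.card (Fin (n * n + 1)) := by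
    simp [ZMod.card]
  obtain ⟨i, j, hij, hfij⟩ := Fintype.exists_ne_map_eq_of_card_lt
    (fun i : Fin (n * n + 1) => ((S.take i).sum)) hcard
  wlog hlt : (i : ℕ) < (j : ℕ) generalizing i j
  · exact this j i hij.symm hfij.symm (by omega)
  set B := (S.drop i).take (j - i) with hB
  have htake : S.take j = S.take i ++ B := by
    have : (j : ℕ) = i + (j - i) := by omega
    rw [this, List.take_add]
  have hBsum : B.sum = 0 := by
    have := hfij
    rw [htake, List.sum_append] at this
    exact by linear_combination (norm := abel_nf) -this
  refine ⟨B.map (fun x => (x, 1)), ?_, ?_, ?_, ?_⟩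
  · have hBlen : B.length = j - i := by
      rw [hB, List.length_take, List.length_drop]
      omega
    simp only [ne_eq, List.map_eq_nil_iff]
    intro hBnil
    rw [hBnil] at hBlen
    simp at hBlen
    omega
  · have heq : (B.map (fun x => ((x : ZMod n × ZMod n), (1:ℕ)))).map Prod.fst = B := by
      rw [List.map_map]
      exact List.map_id'' (fun x => rfl) B
    rw [heq]
    exact (List.take_prefix _ _).isInfix.trans (List.drop_suffix _ _).isInfix
  · intro p hp
    simp only [List.mem_map] at hp
    obtain ⟨x, -, rfl⟩ := hp
    exact ⟨le_refl 1, by omega⟩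
  · rw [List.map_map]
    have : ((fun p : (ZMod n × ZMod n) × ℕ => p.2 • p.1) ∘ fun x => (x, 1)) = id := by
      funext x; simp
    rw [this, List.map_id, hBsum]

/-- With full weight `A = [1, n-1]`, the sequence `(g,0), (0,h), (g,0)` over `C_n × C_n`
(where `g, h` generate the factors) has no `A`-weighted consecutive zero-sum subsequence;
hence `C_A(C_n²) ≥ 4`. -/
theorem stmt19 (n : ℕ) (hn : 2 ≤ n) (g h : ZMod n)
    (hg : addOrderOf g = n) (hh : addOrderOf h = n) :
    ¬ WConsecZero (Set.Icc 1 (n - 1))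
        ([((g, 0) : ZMod n × ZMod n), (0, h), (g, 0)]) ∧
      4 ≤ CDavAdd (Set.Icc 1 (n - 1)) (ZMod n × ZMod n) := by
  haveI : NeZero n := ⟨by omega⟩
  have hnot : ¬ WConsecZero (Set.Icc 1 (n - 1))
      ([((g, 0) : ZMod n × ZMod n), (0, h), (g, 0)]) := by
    rintro ⟨T, hne, hinf, hA, hsum⟩
    rcases infix19 hinf with hc | hc | hc | hc | hc | hc | hc
    · simp_all
    · rcases T with _ | ⟨p, _ | ⟨q, T⟩⟩
      · simp at hne
      · simp only [List.map_cons, List.map_nil, List.cons.injEq] at hc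
        obtain ⟨hp, -⟩ := hc
        apply key19 hn hg (hA p (by simp))
        have h1 : p.2 • p.1 = 0 := by simpa using hsum
        simpa [hp] using congrArg Prod.fst h1
      · simp at hc
    · rcases T with _ | ⟨p, _ | ⟨q, T⟩⟩
      · simp at hne
      · simp only [List.map_cons, List.map_nil, List.cons.injEq] at hc
        obtain ⟨hp, -⟩ := hc
        apply key19 hn hh (hA p (by simp))
        have h1 : p.2 • p.1 = 0 := by simpa using hsum
        simpa [hp] using congrArg Prod.snd h1
      · simp at hc
    · rcases T with _ | ⟨p, _ | ⟨q, T⟩⟩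
      · simp at hne
      · simp only [List.map_cons, List.map_nil, List.cons.injEq] at hc
        obtain ⟨hp, -⟩ := hc
        apply key19 hn hg (hA p (by simp))
        have h1 : p.2 • p.1 = 0 := by simpa using hsum
        simpa [hp] using congrArg Prod.fst h1
      · simp at hc
    · rcases T with _ | ⟨p, _ | ⟨q, _ | ⟨r, T⟩⟩⟩
      · simp at hne
      · simp at hc
      · simp only [List.map_cons, List.map_nil, List.cons.injEq] at hc
        obtain ⟨hp, hq, -⟩ := hc
        apply key19 hn hg (hA p (by simp))
        have h1 : p.2 • p.1 + q.2 • q.1 = 0 := by simpa using hsum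
        simpa [hp, hq] using congrArg Prod.fst h1
      · simp at hc
    · rcases T with _ | ⟨p, _ | ⟨q, _ | ⟨r, T⟩⟩⟩
      · simp at hne
      · simp at hc
      · simp only [List.map_cons, List.map_nil, List.cons.injEq] at hc
        obtain ⟨hp, hq, -⟩ := hc
        apply key19 hn hg (hA q (by simp))
        have h1 : p.2 • p.1 + q.2 • q.1 = 0 := by simpa using hsum
        simpa [hp, hq] using congrArg Prod.fst h1
      · simp at hc
    · rcases T with _ | ⟨p, _ | ⟨q, _ | ⟨r, _ | ⟨w, T⟩⟩⟩⟩
      · simp at hne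
      · simp at hc
      · simp at hc
      · simp only [List.map_cons, List.map_nil, List.cons.injEq] at hc
        obtain ⟨hp, hq, hr, -⟩ := hc
        apply key19 hn hh (hA q (by simp))
        have h1 : p.2 • p.1 + (q.2 • q.1 + r.2 • r.1) = 0 := by simpa using hsum
        simpa [hp, hq, hr] using congrArg Prod.snd h1
      · simp at hc
  refine ⟨hnot, ?_⟩
  have hne : {ℓ : ℕ | ∀ S : List (ZMod n × ZMod n), ℓ ≤ S.length →
      WConsecZero (Set.Icc 1 (n - 1)) S}.Nonempty := ⟨n * n + 1, exists19 n hn⟩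
  have hmem := Nat.sInf_mem hne
  show 4 ≤ sInf {ℓ : ℕ | ∀ S : List (ZMod n × ZMod n), ℓ ≤ S.length →
      WConsecZero (Set.Icc 1 (n - 1)) S}
  by_contra hlt
  push_neg at hlt
  exact hnot (hmem _ (by simp; omega))
end
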